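/- arXiv:1102.5336 — 5 statements merged into one kernel-verified Lean document; each statement's English description precedes it below -/
import Mathlib

section
/- Let k be a perfect field of characteristic p > 0, R = k[x_1,…,x_n], l ≥ 1, and let M, N be R-modules. Regard Hom_R(F^l_*(M), N) (R-linear maps from M-with-scalars-restricted-along-φ_l to N) as an R-module via (r·g)(x) = g(r·x) for r ∈ R, x ∈ M. Then the map Θ : Hom_R(F^l_*(M), N) → Hom_R(M, F^{*l}(N)) defined by Θ(g)(x) = Σ_ī e_ī ⊗ g(e_{\overline{p^l−1}−ī} · x), where the sum runs over all multi-indices ī with 0 ≤ i_j ≤ p^l − 1 and \overline{p^l−1}−ī is the componentwise difference, is an R-linear bijection; its inverse sends an R-linear map f : M → F^{*l}(N) to the coordinate function f_{\overline{p^l−1}}, where f(x) = Σ_ī e_ī ⊗ f_ī(x) is the unique expansion of f in the basis {e_ī}. -/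
open MvPolynomial TensorProduct

noncomputable section

/-- The target copy of `R = k[x₁,…,xₙ]`, regarded as an algebra over `R`
via the `l`-th iterate of the Frobenius, `φ_l : r ↦ r ^ (p ^ l)`. -/
def FrobTarget (k : Type) [Field k] (n p l : ℕ) : Type := MvPolynomial (Fin n) k

instance (k : Type) [Field k] (n p l : ℕ) : CommRing (FrobTarget k n p l) :=
  inferInstanceAs (CommRing (MvPolynomial (Fin n) k))

/-- `φ_l : R → R`, `r ↦ r ^ (p ^ l)`, viewed as a ring homomorphism into the target copy. -/
def frobHom (k : Type) [Field k] (n p l : ℕ) [Fact p.Prime] [CharP k p] :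
    MvPolynomial (Fin n) k →+* FrobTarget k n p l :=
  iterateFrobenius (MvPolynomial (Fin n) k) p l

instance (k : Type) [Field k] (n p l : ℕ) [Fact p.Prime] [CharP k p] :
    Algebra (MvPolynomial (Fin n) k) (FrobTarget k n p l) :=
  (frobHom k n p l).toAlgebra

/-- The Frobenius base change `F^{*l}(N) = R ⊗_{φ_l} N`:  the tensor product in which the
left-hand copy of `R` is a right `R`-module via `φ_l`, with `R` acting through the left factor. -/
def Fstar (k : Type) [Field k] (n p l : ℕ) [Fact p.Prime] [CharP k p]
    (N : Type) [AddCommGroup N] [Module (MvPolynomial (Fin n) k) N] : Type :=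
  FrobTarget k n p l ⊗[MvPolynomial (Fin n) k] N

instance (k : Type) [Field k] (n p l : ℕ) [Fact p.Prime] [CharP k p]
    (N : Type) [AddCommGroup N] [Module (MvPolynomial (Fin n) k) N] :
    AddCommGroup (Fstar k n p l N) :=
  inferInstanceAs (AddCommGroup (FrobTarget k n p l ⊗[MvPolynomial (Fin n) k] N))

/-- `R` acts on `F^{*l}(N)` through the left factor. -/
instance (k : Type) [Field k] (n p l : ℕ) [Fact p.Prime] [CharP k p]
    (N : Type) [AddCommGroup N] [Module (MvPolynomial (Fin n) k) N] :
    Module (MvPolynomial (Fin n) k) (Fstar k n p l N) :=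
  inferInstanceAs
    (Module (FrobTarget k n p l) (FrobTarget k n p l ⊗[MvPolynomial (Fin n) k] N))

/-- The canonical identification of `R` with the target copy of `R`. -/
def toT (k : Type) [Field k] (n p l : ℕ) (r : MvPolynomial (Fin n) k) :
    FrobTarget k n p l := r

/-- Elementary tensors `b ⊗ y` in `F^{*l}(N)`. -/
def tensorMk (k : Type) [Field k] (n p l : ℕ) [Fact p.Prime] [CharP k p]
    (N : Type) [AddCommGroup N] [Module (MvPolynomial (Fin n) k) N]
    (b : FrobTarget k n p l) (y : N) : Fstar k n p l N :=
  b ⊗ₜ[MvPolynomial (Fin n) k] y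

/-- The monomial `e_ī = x₁^{i₁} ⋯ xₙ^{iₙ}` in the target copy of `R`. -/
def eMono (k : Type) [Field k] (n p l : ℕ) (v : Fin n → ℕ) : FrobTarget k n p l :=
  toT k n p l (∏ j, X j ^ v j)

/-- The degree-`d` component of `F^{*l}(N)` for a `ℤ`-graded module `N`:  the additive span of
the elementary tensors `r ⊗ y` with `r ∈ R_a`, `y ∈ N_b` and `a + p^l • b = d`. -/
def FstarGrade (k : Type) [Field k] (n p l : ℕ) [Fact p.Prime] [CharP k p]
    (N : Type) [AddCommGroup N] [Module (MvPolynomial (Fin n) k) N]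
    (𝓝 : ℤ → AddSubgroup N) (d : ℤ) : AddSubgroup (Fstar k n p l N) :=
  AddSubgroup.closure { z | ∃ (a : ℕ) (b : ℤ) (r : MvPolynomial (Fin n) k) (y : N),
    r ∈ homogeneousSubmodule (Fin n) k a ∧ y ∈ 𝓝 b ∧ (a : ℤ) + (p : ℤ) ^ l * b = d ∧
    z = tensorMk k n p l N (toT k n p l r) y }

/-- The top multi-index `(p^l − 1, …, p^l − 1)`. -/
def topIdx (n p l : ℕ) [Fact p.Prime] : Fin n → Fin (p ^ l) :=
  fun _ => ⟨p ^ l - 1, Nat.sub_lt (pow_pos (Fact.out : p.Prime).pos l) one_pos⟩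
/-- Restriction of scalars `F^l_*(M)`: the `R`-module `M` regarded as an `R`-module
through `φ_l : r ↦ r^{p^l}`. -/
def FrobRestrict (k : Type) [Field k] (n p l : ℕ) (M : Type) : Type := M

instance (k : Type) [Field k] (n p l : ℕ) (M : Type) [AddCommGroup M] :
    AddCommGroup (FrobRestrict k n p l M) := ‹AddCommGroup M›

instance (k : Type) [Field k] (n p l : ℕ) [Fact p.Prime] [CharP k p]
    (M : Type) [AddCommGroup M] [Module (MvPolynomial (Fin n) k) M] :
    Module (MvPolynomial (Fin n) k) (FrobRestrict k n p l M) :=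
  Module.compHom M (iterateFrobenius (MvPolynomial (Fin n) k) p l)

/-- The canonical identification of `M` with `F^l_*(M)` (the identity on elements). -/
def toRes (k : Type) [Field k] (n p l : ℕ) (M : Type) (x : M) : FrobRestrict k n p l M := x

/-!
Through `φ_l`, `R` is free over itself on the monomials `e_ī` (`0 ≤ i_j < p^l`); write
`ī* = \overline{p^l−1} − ī`. Taking the `e_{\overline{p^l−1}}`-coordinate is an `R`-linear map
`τ : F^l_*(R) → R`: it sends `c·x^d` to `c^{1/p^l}·x^{d/p^l}` if every `d_j ≡ −1 (mod p^l)` and to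
`0` otherwise. Since `τ(e_{ī*}·e_ū) = δ_{īū}`, every `b` expands as
`b = Σ_ī τ(e_{ī*}·b)·e_ī = Σ_ī τ(e_ī·b)·e_{ī*}`.

For any algebra `A → B` with a trace `τ : B → A` and a pair of bases `e`, `e'` satisfying these two
expansions, they are exactly what is needed to see that `Θ(g) = (x ↦ Σ_i e_i ⊗ g(e'_i·x))` is
`B`-linear and that `f ↦ (τ ⊗ id) ∘ f` is a two-sided inverse of `Θ`.
-/

section TraceDualBasis

variable {A B ι : Type*} [CommSemiring A] [CommSemiring B] [Algebra A B] [Fintype ι]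

structure IsTraceDualBasis (τ : B →ₗ[A] A) (e e' : ι → B) : Prop where
  sum_smul : ∀ b, ∑ i, τ (e' i * b) • e i = b
  sum_smul_dual : ∀ b, ∑ i, τ (e i * b) • e' i = b

def traceContraction (τ : B →ₗ[A] A) (N : Type*) [AddCommMonoid N] [Module A N] :
    B ⊗[A] N →ₗ[A] N :=
  TensorProduct.lid A N ∘ₗ TensorProduct.map τ LinearMap.id

@[simp]
theorem traceContraction_tmul (τ : B →ₗ[A] A) {N : Type*} [AddCommMonoid N] [Module A N]
    (b : B) (y : N) : traceContraction τ N (b ⊗ₜ y) = τ b • y := rfl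

namespace IsTraceDualBasis

variable {τ : B →ₗ[A] A} {e e' : ι → B}
  {M N : Type*} [AddCommMonoid M] [Module A M] [Module B M] [IsScalarTower A B M]
  [AddCommMonoid N] [Module A N]

theorem sum_tmul_apply_smul_smul (h : IsTraceDualBasis τ e e') (g : M →ₗ[A] N) (b : B)
    (x : M) :
    ∑ i, e i ⊗ₜ[A] g (e' i • b • x) = b • ∑ i, e i ⊗ₜ[A] g (e' i • x) := by
  have expand (i : ι) : g (e' i • b • x) = ∑ j, τ (e j * (e' i * b)) • g (e' j • x) := by
    conv_lhs => rw [smul_smul, ← h.sum_smul_dual (e' i * b)]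
    simp only [Finset.sum_smul, map_sum, smul_assoc, map_smul]
  calc ∑ i, e i ⊗ₜ[A] g (e' i • b • x)
      = ∑ j, (∑ i, τ (e' i * (e j * b)) • e i) ⊗ₜ[A] g (e' j • x) := by
        simp only [expand, tmul_sum, sum_tmul, smul_tmul]
        rw [Finset.sum_comm]
        refine Finset.sum_congr rfl fun j _ => Finset.sum_congr rfl fun i _ => ?_
        rw [mul_left_comm]
    _ = b • ∑ j, e j ⊗ₜ[A] g (e' j • x) := by
        simp only [h.sum_smul, Finset.smul_sum, smul_tmul', smul_eq_mul, mul_comm]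

theorem sum_tmul_traceContraction_smul (h : IsTraceDualBasis τ e e') (z : B ⊗[A] N) :
    ∑ i, e i ⊗ₜ[A] traceContraction τ N (e' i • z) = z := by
  induction z using TensorProduct.induction_on with
  | zero => simp
  | tmul b y =>
    simp only [smul_tmul', smul_eq_mul, traceContraction_tmul, ← smul_tmul, ← sum_tmul,
      h.sum_smul]
  | add z w hz hw => simp only [smul_add, map_add, tmul_add, Finset.sum_add_distrib, hz, hw]

def homEquiv (h : IsTraceDualBasis τ e e') : (M →ₗ[A] N) ≃+ (M →ₗ[B] B ⊗[A] N) where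
  toFun g :=
    { toFun x := ∑ i, e i ⊗ₜ[A] g (e' i • x)
      map_add' x y := by simp only [smul_add, map_add, tmul_add, Finset.sum_add_distrib]
      map_smul' b x := h.sum_tmul_apply_smul_smul g b x }
  invFun f := traceContraction τ N ∘ₗ f.restrictScalars A
  left_inv g := by
    ext x
    have hx : ∑ i, τ (e i) • e' i • x = x := by
      simpa only [mul_one, smul_assoc, Finset.sum_smul, one_smul] using
        congrArg (· • x) (h.sum_smul_dual 1)
    simp only [LinearMap.coe_comp, Function.comp_apply, LinearMap.coe_restrictScalars,
      LinearMap.coe_mk, AddHom.coe_mk, map_sum, traceContraction_tmul, ← map_smul]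
    rw [← map_sum, hx]
  right_inv f := by
    ext x
    simp only [LinearMap.coe_comp, Function.comp_apply, LinearMap.coe_restrictScalars,
      LinearMap.coe_mk, AddHom.coe_mk, map_smul]
    exact h.sum_tmul_traceContraction_smul (f x)
  map_add' g₁ g₂ := by
    ext x
    simp [tmul_add, Finset.sum_add_distrib]

theorem homEquiv_apply (h : IsTraceDualBasis τ e e') (g : M →ₗ[A] N) (x : M) :
    h.homEquiv g x = ∑ i, e i ⊗ₜ[A] g (e' i • x) := rfl

theorem homEquiv_eq_smul_of_apply_eq (h : IsTraceDualBasis τ e e') {g g' : M →ₗ[A] N} (b : B)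
    (hg : ∀ x, g' x = g (b • x)) : h.homEquiv g' = b • h.homEquiv g := by
  ext x
  rw [LinearMap.smul_apply, ← map_smul, homEquiv_apply, homEquiv_apply]
  simp only [hg, smul_smul, mul_comm b]

end IsTraceDualBasis

end TraceDualBasis

theorem Nat.sub_one_sub_add_mod_eq_sub_one_iff {q a b : ℕ} (ha : a < q) (hb : b < q) :
    (q - 1 - a + b) % q = q - 1 ↔ a = b := by
  rcases lt_or_ge (q - 1 - a + b) q with h | h
  · rw [Nat.mod_eq_of_lt h]; omega
  · rw [Nat.mod_eq_sub_mod h, Nat.mod_eq_of_lt (by omega)]; omega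

namespace MvPolynomial

variable {σ k : Type*} [Fintype σ] [CommSemiring k] (p l : ℕ) [ExpChar k p] [PerfectRing k p]

theorem monomial_eq_C_mul_prod_X_pow (d : σ →₀ ℕ) (c : k) :
    monomial d c = C c * ∏ j, X j ^ d j := by
  rw [monomial_eq, Finsupp.prod_fintype _ _ fun _ => pow_zero _]

def frobTrace : MvPolynomial σ k →+ MvPolynomial σ k :=
  AddMonoidAlgebra.liftNC ((C : k →+* MvPolynomial σ k).toAddMonoidHom.comp
      (iterateFrobeniusEquiv k p l).symm.toAddMonoidHom)
    fun d => if ∀ j, d.toAdd j % p ^ l = p ^ l - 1 then ∏ j, X j ^ (d.toAdd j / p ^ l) else 0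

theorem frobTrace_C_mul_prod_X_pow (c : k) (f : σ → ℕ) :
    frobTrace p l (C c * ∏ j, X j ^ f j) =
      if ∀ j, f j % p ^ l = p ^ l - 1 then
        C ((iterateFrobeniusEquiv k p l).symm c) * ∏ j, X j ^ (f j / p ^ l) else 0 := by
  have hmono : C c * ∏ j, X j ^ f j = monomial (Finsupp.equivFunOnFinite.symm f) c := by
    simp [monomial_eq_C_mul_prod_X_pow]
  rw [hmono, ← single_eq_monomial, frobTrace, AddMonoidAlgebra.liftNC_single]
  simp [mul_ite]

theorem C_mul_prod_X_pow_pow (c : k) (f : σ → ℕ) (m : ℕ) :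
    (C c * ∏ j, X j ^ f j) ^ m = C (c ^ m) * ∏ j, (X j : MvPolynomial σ k) ^ (m * f j) := by
  simp only [mul_pow, ← map_pow, ← Finset.prod_pow, ← pow_mul, mul_comm]

theorem C_mul_prod_X_pow_mul (c c' : k) (f f' : σ → ℕ) :
    (C c * ∏ j, X j ^ f j) * (C c' * ∏ j, X j ^ f' j) =
      C (c * c') * ∏ j, (X j : MvPolynomial σ k) ^ (f j + f' j) := by
  simp only [map_mul, pow_add, Finset.prod_mul_distrib]
  ring

theorem frobTrace_pow_mul (a s : MvPolynomial σ k) :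
    frobTrace p l (a ^ p ^ l * s) = a * frobTrace p l s := by
  induction s using induction_on' with
  | add s t hs ht => rw [mul_add, map_add, map_add, hs, ht, mul_add]
  | monomial d c =>
    induction a using induction_on' with
    | add a b ha hb => rw [add_pow_expChar_pow, add_mul, map_add, ha, hb, add_mul]
    | monomial e b =>
      have hq : 0 < p ^ l := expChar_pow_pos k p l
      have hroot : (iterateFrobeniusEquiv k p l).symm (b ^ p ^ l) = b :=
        (iterateFrobeniusEquiv k p l).symm_apply_apply b
      simp only [monomial_eq_C_mul_prod_X_pow, C_mul_prod_X_pow_pow, C_mul_prod_X_pow_mul,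
        frobTrace_C_mul_prod_X_pow, Nat.mul_add_mod, Nat.mul_add_div hq, RingEquiv.map_mul, hroot]
      split_ifs
      · rw [C_mul_prod_X_pow_mul]
      · rw [mul_zero]

theorem frobTrace_prod_X_pow_mul_prod_X_pow (v u : σ → Fin (p ^ l)) :
    frobTrace p l ((∏ j, X j ^ (p ^ l - 1 - (v j : ℕ))) * ∏ j, X j ^ (u j : ℕ)) =
      if v = u then 1 else (0 : MvPolynomial σ k) := by
  have hprod : (∏ j, X j ^ (p ^ l - 1 - (v j : ℕ))) * ∏ j, X j ^ (u j : ℕ) =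
      C 1 * ∏ j, (X j : MvPolynomial σ k) ^ (p ^ l - 1 - (v j : ℕ) + u j) := by
    simp only [C_1, one_mul, pow_add, Finset.prod_mul_distrib]
  have hcond : (∀ j, (p ^ l - 1 - (v j : ℕ) + u j) % p ^ l = p ^ l - 1) ↔ v = u := by
    simp only [Nat.sub_one_sub_add_mod_eq_sub_one_iff (v _).isLt (u _).isLt, ← Fin.ext_iff]
    exact _root_.funext_iff.symm
  rw [hprod, frobTrace_C_mul_prod_X_pow, map_one, C_1, one_mul]
  by_cases huv : v = u
  · subst huv
    have hdiv : ∀ j, (p ^ l - 1 - (v j : ℕ) + v j) / p ^ l = 0 := fun j =>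
      Nat.div_eq_of_lt (by have := (v j).isLt; omega)
    rw [if_pos (hcond.mpr rfl), if_pos rfl]
    simp only [hdiv, pow_zero, Finset.prod_const_one]
  · rw [if_neg (mt hcond.mp huv), if_neg huv]

theorem exists_eq_pow_mul_prod_X_pow (d : σ →₀ ℕ) (c : k) :
    ∃ (a : MvPolynomial σ k) (u : σ → Fin (p ^ l)),
      monomial d c = a ^ p ^ l * ∏ j, X j ^ (u j : ℕ) := by
  have hq : 0 < p ^ l := expChar_pow_pos k p l
  refine ⟨C ((iterateFrobeniusEquiv k p l).symm c) * ∏ j, X j ^ (d j / p ^ l),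
    fun j => ⟨d j % p ^ l, Nat.mod_lt _ hq⟩, ?_⟩
  have hroot : (iterateFrobeniusEquiv k p l).symm c ^ p ^ l = c :=
    (iterateFrobeniusEquiv k p l).apply_symm_apply c
  simp only [C_mul_prod_X_pow_pow, monomial_eq_C_mul_prod_X_pow, hroot, mul_assoc,
    ← Finset.prod_mul_distrib, ← pow_add, Nat.div_add_mod]

theorem sum_frobTrace_pow_mul_prod_X_pow [DecidableEq σ] (b : MvPolynomial σ k) :
    ∑ v : σ → Fin (p ^ l),
      frobTrace p l ((∏ j, X j ^ (p ^ l - 1 - (v j : ℕ))) * b) ^ p ^ l * ∏ j, X j ^ (v j : ℕ) =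
        b := by
  induction b using induction_on' with
  | add b b' hb hb' =>
    simp only [mul_add, map_add, add_pow_expChar_pow, add_mul, Finset.sum_add_distrib, hb, hb']
  | monomial d c =>
    obtain ⟨a, u, hdc⟩ := exists_eq_pow_mul_prod_X_pow p l d c
    have hq : p ^ l ≠ 0 := (expChar_pow_pos k p l).ne'
    simp only [hdc, mul_left_comm _ (a ^ p ^ l), frobTrace_pow_mul,
      frobTrace_prod_X_pow_mul_prod_X_pow, mul_ite, mul_one, mul_zero, ite_pow, zero_pow hq,
      ite_mul, zero_mul, Finset.sum_ite_eq', Finset.mem_univ, if_true]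

theorem sum_frobTrace_pow_mul_prod_X_pow_sub [DecidableEq σ] (b : MvPolynomial σ k) :
    ∑ v : σ → Fin (p ^ l), frobTrace p l ((∏ j, X j ^ (v j : ℕ)) * b) ^ p ^ l *
      ∏ j, X j ^ (p ^ l - 1 - (v j : ℕ)) = b := by
  conv_rhs => rw [← sum_frobTrace_pow_mul_prod_X_pow p l b]
  refine Fintype.sum_equiv (.piCongrRight fun (_ : σ) => (Fin.revPerm : Equiv.Perm (Fin (p ^ l))))
    _ _ fun v => ?_
  have hrev : ∀ j, ((Fin.revPerm (v j) : Fin (p ^ l)) : ℕ) = p ^ l - 1 - v j := fun j => by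
    rw [Fin.revPerm_apply, Fin.val_rev]; omega
  simp only [Equiv.piCongrRight_apply, Pi.map_apply, hrev,
    Nat.sub_sub_self (Nat.le_sub_one_of_lt (v _).isLt)]

end MvPolynomial

section Frobenius

variable (k : Type) [Field k] [PerfectField k] (p : ℕ) [Fact p.Prime] [CharP k p] (n l : ℕ)

def frobTraceLinear : FrobTarget k n p l →ₗ[MvPolynomial (Fin n) k] MvPolynomial (Fin n) k where
  toFun s := frobTrace p l (s : MvPolynomial (Fin n) k)
  map_add' := map_add _
  map_smul' a s := frobTrace_pow_mul p l a s

theorem isTraceDualBasis_frobTraceLinear :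
    IsTraceDualBasis (frobTraceLinear k p n l)
      (fun v : Fin n → Fin (p ^ l) => eMono k n p l fun j => v j)
      (fun v => eMono k n p l fun j => p ^ l - 1 - v j) :=
  ⟨sum_frobTrace_pow_mul_prod_X_pow p l, sum_frobTrace_pow_mul_prod_X_pow_sub p l⟩

theorem frobTraceLinear_eMono (v : Fin n → Fin (p ^ l)) :
    frobTraceLinear k p n l (eMono k n p l fun j => v j) = if v = topIdx n p l then 1 else 0 := by
  have h := frobTrace_prod_X_pow_mul_prod_X_pow (k := k) p l (topIdx n p l) v
  simp only [topIdx, Nat.sub_self, pow_zero, Finset.prod_const_one, one_mul, eq_comm] at h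
  exact h

variable (M N : Type) [AddCommGroup M] [Module (MvPolynomial (Fin n) k) M]
  [AddCommGroup N] [Module (MvPolynomial (Fin n) k) N]

instance : Module (FrobTarget k n p l) (FrobRestrict k n p l M) :=
  ‹Module (MvPolynomial (Fin n) k) M›

instance : IsScalarTower (MvPolynomial (Fin n) k) (FrobTarget k n p l) (FrobRestrict k n p l M) :=
  ⟨fun a b x => mul_smul (frobHom k n p l a) b x⟩

-- Both sides consist of the same maps: `FrobRestrict M` is `M`, and the scalar action on `Fstar N`
-- is that of the target copy of `R` on `FrobTarget ⊗ N`.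
def frobRestrictLinearMapEquiv :
    (FrobRestrict k n p l M →ₗ[FrobTarget k n p l]
        FrobTarget k n p l ⊗[MvPolynomial (Fin n) k] N)
      ≃+ (M →ₗ[MvPolynomial (Fin n) k] Fstar k n p l N) where
  toFun f :=
    { toFun x := f (toRes k n p l M x)
      map_add' _ _ := f.map_add _ _
      map_smul' r x := f.map_smul (toT k n p l r) (toRes k n p l M x) }
  invFun f :=
    { toFun x := f x
      map_add' := f.map_add
      map_smul' b x := f.map_smul b x }
  left_inv _ := rfl
  right_inv _ := rfl
  map_add' _ _ := rfl

end Frobenius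

theorem statement1_general (k : Type) [Field k] [PerfectField k] (p : ℕ) [Fact p.Prime] [CharP k p]
    (n l : ℕ)
    (M N : Type) [AddCommGroup M] [Module (MvPolynomial (Fin n) k) M]
    [AddCommGroup N] [Module (MvPolynomial (Fin n) k) N] :
    ∃ Θ : (FrobRestrict k n p l M →ₗ[MvPolynomial (Fin n) k] N) ≃
        (M →ₗ[MvPolynomial (Fin n) k] Fstar k n p l N),
      -- the formula defining `Θ`
      (∀ g (x : M), Θ g x =
        ∑ v : Fin n → Fin (p ^ l),
          tensorMk k n p l N (eMono k n p l fun j => (v j : ℕ))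
            (g (toRes k n p l M ((∏ j, (X j : MvPolynomial (Fin n) k) ^ (p ^ l - 1 - (v j : ℕ))) • x)))) ∧
      -- `Θ` is additive
      (∀ g₁ g₂, Θ (g₁ + g₂) = Θ g₁ + Θ g₂) ∧
      -- `Θ` is `R`-linear for the module structure `(r·g)(x) = g(r·x)` on the source
      (∀ (r : MvPolynomial (Fin n) k) g h, (∀ x : M, h x = g (toRes k n p l M (r • x))) → Θ h = r • Θ g) ∧
      -- the inverse of `Θ` sends `f` to the coordinate function `f_{(p^l−1,…,p^l−1)}`
      (∀ f (x : M) (c : (Fin n → Fin (p ^ l)) → N),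
        f x = ∑ v : Fin n → Fin (p ^ l),
            tensorMk k n p l N (eMono k n p l fun j => (v j : ℕ)) (c v) →
        Θ.symm f x = c (topIdx n p l)) := by
  have hdual := isTraceDualBasis_frobTraceLinear k p n l
  let Θ := hdual.homEquiv.trans (frobRestrictLinearMapEquiv k p n l M N)
  refine ⟨Θ.toEquiv, fun g x => rfl, map_add Θ, fun r g g' hg => ?_, fun f x c hfx => ?_⟩
  · exact congrArg (frobRestrictLinearMapEquiv k p n l M N)
      (hdual.homEquiv_eq_smul_of_apply_eq (toT k n p l r) hg)
  · change traceContraction _ N (f x) = c (topIdx n p l)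
    rw [show f x = ∑ v : Fin n → Fin (p ^ l), (eMono k n p l fun j => (v j : ℕ)) ⊗ₜ c v
      from hfx]
    simp only [map_sum, traceContraction_tmul, frobTraceLinear_eMono, ite_smul, one_smul,
      zero_smul, Finset.sum_ite_eq', Finset.mem_univ, if_true]

/-- the duality theorem.  For `k` perfect of characteristic `p > 0`
and `R`-modules `M`, `N`, the map
`Θ : Hom_R(F^l_*(M), N) → Hom_R(M, F^{*l}(N))`,
`Θ(g)(x) = Σ_v e_v ⊗ g(e_{(p^l−1,…,p^l−1) − v} • x)`,
is an `R`-linear bijection (where `Hom_R(F^l_*(M), N)` carries the module structure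
`(r·g)(x) = g(r·x)`); its inverse sends `f` to the top coordinate function
`f_{(p^l−1,…,p^l−1)}` of the unique basis expansion `f(x) = Σ_v e_v ⊗ f_v(x)`. -/
theorem statement1 (k : Type) [Field k] [PerfectField k] (p : ℕ) [Fact p.Prime] [CharP k p]
    (n l : ℕ) (hl : 1 ≤ l)
    (M N : Type) [AddCommGroup M] [Module (MvPolynomial (Fin n) k) M]
    [AddCommGroup N] [Module (MvPolynomial (Fin n) k) N] :
    ∃ Θ : (FrobRestrict k n p l M →ₗ[MvPolynomial (Fin n) k] N) ≃
        (M →ₗ[MvPolynomial (Fin n) k] Fstar k n p l N),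
      -- the formula defining `Θ`
      (∀ g (x : M), Θ g x =
        ∑ v : Fin n → Fin (p ^ l),
          tensorMk k n p l N (eMono k n p l fun j => (v j : ℕ))
            (g (toRes k n p l M ((∏ j, (X j : MvPolynomial (Fin n) k) ^ (p ^ l - 1 - (v j : ℕ))) • x)))) ∧
      -- `Θ` is additive
      (∀ g₁ g₂, Θ (g₁ + g₂) = Θ g₁ + Θ g₂) ∧
      -- `Θ` is `R`-linear for the module structure `(r·g)(x) = g(r·x)` on the source
      (∀ (r : MvPolynomial (Fin n) k) g h, (∀ x : M, h x = g (toRes k n p l M (r • x))) → Θ h = r • Θ g) ∧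
      -- the inverse of `Θ` sends `f` to the coordinate function `f_{(p^l−1,…,p^l−1)}`
      (∀ f (x : M) (c : (Fin n → Fin (p ^ l)) → N),
        f x = ∑ v : Fin n → Fin (p ^ l),
            tensorMk k n p l N (eMono k n p l fun j => (v j : ℕ)) (c v) →
        Θ.symm f x = c (topIdx n p l)) :=
  statement1_general k p n l M N
end
end

section
/- Let k be a perfect field of characteristic p > 0, R = k[x_1,…,x_n], l ≥ 1, and let M, N be R-modules. Let f : M → F^{*l}(N) be an R-linear map, and write f(x) = Σ_ī e_ī ⊗ f_ī(x) for the unique expansion of f(x) in the basis {e_ī : 0 ≤ i_j ≤ p^l − 1}. If the top coordinate function f_{\overline{p^l−1}} is identically zero, then f is the zero map. -/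
open MvPolynomial TensorProduct

noncomputable section

/-! Over a perfect field, `R` is free over `φ_l(R)` on the monomials `e_v`, and the top
coordinate `g ↦ g_top` of `g = Σ_v e_v · φ_l(g_v)` is `R`-linear from the `φ_l`-twisted `R`
to `R`. Tensoring with `N` gives `τ : F^{*l}(N) → N` with `τ(Σ_w e_w ⊗ y_w) = y_top`, and
multiplication by `x^{top - v}` moves the `v`-coordinate to the top:
`τ(x^{top - v} · Σ_w e_w ⊗ y_w) = y_v`. Hence
`f_v(x) = τ(f(x^{top - v} x)) = f_top(x^{top - v} x) = 0`. -/

lemma Nat.sub_one_sub_add_mod_eq_sub_one_iff_s2 {q v w : ℕ} (hv : v < q) (hw : w < q) :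
    (q - 1 - v + w) % q = q - 1 ↔ w = v := by
  rcases lt_or_ge (q - 1 - v + w) q with hlt | hge
  · rw [Nat.mod_eq_of_lt hlt]
    omega
  · rw [Nat.mod_eq_sub_mod hge, Nat.mod_eq_of_lt (by omega)]
    omega

namespace MvPolynomial

section FrobeniusTopCoeff

open scoped Classical

variable {σ k : Type*} [CommSemiring k] (p l : ℕ) [ExpChar k p] [PerfectRing k p]

/-- `g ↦ g_{(p^l-1,…,p^l-1)}` for `g = Σ_v x^v · φ_l(g_v)`, `0 ≤ v_i < p^l`: keep the
monomials whose exponents are all `≡ -1 mod p^l` and undo `φ_l` on them. -/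
def frobeniusTopCoeff : MvPolynomial σ k →+ MvPolynomial σ k :=
  (Finsupp.liftAddHom fun d =>
    if ∀ i, d i % p ^ l = p ^ l - 1 then
      (monomial (d.mapRange (· / p ^ l) (Nat.zero_div _))).toAddMonoidHom.comp
        (iterateFrobeniusEquiv k p l).symm.toAddMonoidHom
    else 0).comp AddMonoidAlgebra.coeffAddEquiv.toAddMonoidHom

variable {p l}

lemma frobeniusTopCoeff_monomial (d : σ →₀ ℕ) (a : k) :
    frobeniusTopCoeff p l (monomial d a) =
      if ∀ i, d i % p ^ l = p ^ l - 1 then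
        monomial (d.mapRange (· / p ^ l) (Nat.zero_div _)) ((iterateFrobeniusEquiv k p l).symm a)
      else 0 := by
  change Finsupp.liftAddHom _ (Finsupp.single d a) = _
  rw [Finsupp.liftAddHom_apply_single]
  split_ifs <;> rfl

lemma frobeniusTopCoeff_pow_mul (r g : MvPolynomial σ k) :
    frobeniusTopCoeff p l (r ^ p ^ l * g) = r * frobeniusTopCoeff p l g := by
  induction r using MvPolynomial.induction_on' with
  | add r₁ r₂ h₁ h₂ => rw [add_pow_expChar_pow, add_mul, map_add, h₁, h₂, add_mul]
  | monomial e a =>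
    induction g using MvPolynomial.induction_on' with
    | add g₁ g₂ h₁ h₂ => rw [mul_add, map_add, h₁, h₂, map_add, mul_add]
    | monomial d b =>
      have hq : 0 < p ^ l := pow_pos (expChar_pos k p) l
      have happly (i : σ) : (p ^ l • e + d) i = p ^ l * e i + d i := rfl
      simp only [monomial_pow, monomial_mul, frobeniusTopCoeff_monomial, happly, Nat.mul_add_mod,
        mul_ite, mul_zero]
      refine if_congr Iff.rfl ?_ rfl
      have hdiv : (p ^ l • e + d).mapRange (· / p ^ l) (Nat.zero_div _) =
          e + d.mapRange (· / p ^ l) (Nat.zero_div _) := by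
        ext i
        simp [happly, Nat.mul_add_div hq]
      rw [hdiv, map_mul, ← iterateFrobeniusEquiv_def, RingEquiv.symm_apply_apply]

lemma frobeniusTopCoeff_prod_X_pow [Fintype σ] (a : σ → ℕ) :
    frobeniusTopCoeff p l (∏ i, X i ^ a i : MvPolynomial σ k) =
      if ∀ i, a i % p ^ l = p ^ l - 1 then ∏ i, X i ^ (a i / p ^ l) else 0 := by
  have hprod (b : σ → ℕ) :
      (∏ i, X i ^ b i : MvPolynomial σ k) = monomial (Finsupp.equivFunOnFinite.symm b) 1 := by
    rw [← prod_X_pow_eq_monomial, ← Finsupp.prod,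
      Finsupp.prod_fintype _ _ fun _ => pow_zero _]
    rfl
  rw [hprod, frobeniusTopCoeff_monomial, hprod, map_one]
  congr 3
  ext
  simp

lemma frobeniusTopCoeff_prod_X_pow_mul_prod_X_pow [Fintype σ] (v w : σ → Fin (p ^ l)) :
    frobeniusTopCoeff p l
        ((∏ i, X i ^ (p ^ l - 1 - (v i : ℕ))) * ∏ i, X i ^ (w i : ℕ) : MvPolynomial σ k) =
      if w = v then 1 else 0 := by
  rw [← Finset.prod_mul_distrib]
  simp_rw [← pow_add]
  rw [frobeniusTopCoeff_prod_X_pow]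
  have hmod : (∀ i, (p ^ l - 1 - (v i : ℕ) + w i) % p ^ l = p ^ l - 1) ↔ w = v := by
    simp only [Nat.sub_one_sub_add_mod_eq_sub_one_iff_s2 (v _).isLt (w _).isLt, ← Fin.ext_iff]
    exact _root_.funext_iff.symm
  by_cases hwv : w = v
  · subst hwv
    have hexp (i : σ) : (p ^ l - 1 - (w i : ℕ) + w i) / p ^ l = 0 :=
      Nat.div_eq_of_lt (by have := (w i).isLt; omega)
    simp only [if_pos (hmod.mpr rfl), hexp, pow_zero, Finset.prod_const_one, if_true]
  · rw [if_neg (hmod.not.mpr hwv), if_neg hwv]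

end FrobeniusTopCoeff

end MvPolynomial

namespace Fstar

variable (k : Type) [Field k] [PerfectField k] (p : ℕ) [Fact p.Prime] [CharP k p] (n l : ℕ)

def frobeniusTopCoeffLinear :
    FrobTarget k n p l →ₗ[MvPolynomial (Fin n) k] MvPolynomial (Fin n) k where
  toFun := frobeniusTopCoeff p l
  map_add' := map_add _
  map_smul' r g := by
    change frobeniusTopCoeff p l (r • g : FrobTarget k n p l) = r * frobeniusTopCoeff p l g
    rw [Algebra.smul_def, RingHom.algebraMap_toAlgebra]
    exact frobeniusTopCoeff_pow_mul r g

variable (N : Type) [AddCommGroup N] [Module (MvPolynomial (Fin n) k) N]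

/-- Only additive: it is linear for the `φ_l`-twisted action on the left factor, not for the
action of `R` on `F^{*l}(N)`. -/
def topCoeff : Fstar k n p l N →+ N :=
  ((TensorProduct.lid _ N).toLinearMap ∘ₗ
    (frobeniusTopCoeffLinear k p n l).rTensor N).toAddMonoidHom

variable {k p n l N}

lemma topCoeff_smul_sum (y : (Fin n → Fin (p ^ l)) → N) (v : Fin n → Fin (p ^ l)) :
    topCoeff k p n l N ((∏ j, X j ^ (p ^ l - 1 - (v j : ℕ)) : MvPolynomial (Fin n) k) •
      ∑ w, tensorMk k n p l N (eMono k n p l fun j => (w j : ℕ)) (y w)) = y v := by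
  have hterm (w : Fin n → Fin (p ^ l)) :
      topCoeff k p n l N ((∏ j, X j ^ (p ^ l - 1 - (v j : ℕ)) : MvPolynomial (Fin n) k) •
        tensorMk k n p l N (eMono k n p l fun j => (w j : ℕ)) (y w)) =
      (if w = v then 1 else 0 : MvPolynomial (Fin n) k) • y w :=
    congrArg (· • y w) (frobeniusTopCoeff_prod_X_pow_mul_prod_X_pow (k := k) v w)
  rw [Finset.smul_sum, map_sum, Finset.sum_congr rfl fun w _ => hterm w]
  simp only [ite_smul, one_smul, zero_smul, Finset.sum_ite_eq', Finset.mem_univ, if_true]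

lemma topCoeff_sum (y : (Fin n → Fin (p ^ l)) → N) :
    topCoeff k p n l N (∑ w, tensorMk k n p l N (eMono k n p l fun j => (w j : ℕ)) (y w)) =
      y (topIdx n p l) := by
  have hone : (∏ j, X j ^ (p ^ l - 1 - (topIdx n p l j : ℕ)) : MvPolynomial (Fin n) k) = 1 := by
    simp [topIdx]
  simpa [hone] using topCoeff_smul_sum (k := k) y (topIdx n p l)

end Fstar

theorem statement2_general (k : Type) [Field k] [PerfectField k] (p : ℕ) [Fact p.Prime] [CharP k p]
    (n l : ℕ)
    (M N : Type) [AddCommGroup M] [Module (MvPolynomial (Fin n) k) M]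
    [AddCommGroup N] [Module (MvPolynomial (Fin n) k) N]
    (f : M →ₗ[MvPolynomial (Fin n) k] Fstar k n p l N)
    (c : M → (Fin n → Fin (p ^ l)) → N)
    (hc : ∀ x : M, f x =
      ∑ v : Fin n → Fin (p ^ l),
        tensorMk k n p l N (eMono k n p l fun j => (v j : ℕ)) (c x v))
    (htop : ∀ x : M, c x (topIdx n p l) = 0) :
    f = 0 := by
  have hcoeff (x : M) (v : Fin n → Fin (p ^ l)) : c x v = 0 := by
    set m : MvPolynomial (Fin n) k := ∏ j, X j ^ (p ^ l - 1 - (v j : ℕ))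
    calc c x v = Fstar.topCoeff k p n l N (m • f x) := by rw [hc x, Fstar.topCoeff_smul_sum]
      _ = Fstar.topCoeff k p n l N (f (m • x)) := by rw [map_smul f]
      _ = c (m • x) (topIdx n p l) := by rw [hc, Fstar.topCoeff_sum]
      _ = 0 := htop _
  ext x
  rw [hc x]
  simp only [hcoeff, tensorMk, TensorProduct.tmul_zero]
  exact Finset.sum_const_zero

/-- Let `k` be a perfect field of characteristic `p > 0`,
`R = k[x₁,…,xₙ]`, `l ≥ 1`, and `M`, `N` `R`-modules.  Let `f : M → F^{*l}(N)` be `R`-linear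
and write `f(x) = Σ_v e_v ⊗ f_v(x)` for the (unique) expansion of `f(x)` in the basis
`{e_v}`.  If the top coordinate function `f_{(p^l−1,…,p^l−1)}` is identically zero,
then `f = 0`. -/
theorem statement2 (k : Type) [Field k] [PerfectField k] (p : ℕ) [Fact p.Prime] [CharP k p]
    (n l : ℕ) (hl : 1 ≤ l)
    (M N : Type) [AddCommGroup M] [Module (MvPolynomial (Fin n) k) M]
    [AddCommGroup N] [Module (MvPolynomial (Fin n) k) N]
    (f : M →ₗ[MvPolynomial (Fin n) k] Fstar k n p l N)
    (c : M → (Fin n → Fin (p ^ l)) → N)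
    (hc : ∀ x : M, f x =
      ∑ v : Fin n → Fin (p ^ l),
        tensorMk k n p l N (eMono k n p l fun j => (v j : ℕ)) (c x v))
    (htop : ∀ x : M, c x (topIdx n p l) = 0) :
    f = 0 :=
  statement2_general k p n l M N f c hc htop
end
end

section
/- Let k be a field of characteristic p > 0 and R = k[x_1,…,x_n], graded by total degree. Let M be a ℤ-graded R-module such that the set {d ∈ ℤ : M_d ≠ 0} is finite and M_{−n} = 0. Then there exists s ∈ ℕ (depending only on the set {d ∈ ℤ : M_d ≠ 0}) such that for every l ≥ s and every ℤ-graded R-module N, the only degree-preserving R-linear map f : M → F^{*l}(N) is the zero map. Here f is degree-preserving if for every d ∈ ℤ, f maps M_d into the degree-d component of F^{*l}(N). -/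
open MvPolynomial TensorProduct

noncomputable section

/-! Write `q = p ^ l` and `top = (q - 1, …, q - 1)`. Every `r ∈ R` is `∑_v X^v r_v`, where `v` runs
over the exponents with entries `< q` and `r_v` only involves exponents divisible by `q`. The map
`r ↦ r_top` is linear over `R` acting through `φ_l`, because `φ_l(R) ⊆ k[X^q]`, and
`r_v = (X^(top - v) r)_top`. Tensoring it with `N` gives an additive endomorphism `T` of
`F^{*l}(N)` with `z = ∑_v X^v • T (X^(top - v) • z)`. Since `X^(q u + top)` has degree `≡ -n`
modulo `q`, `T` kills the degree-`d` part of `F^{*l}(N)` unless `q ∣ d + n`. For `x ∈ M_d`, the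
element `X^(top - v) • x` lies in some `M_e` with `e ≠ -n` in the finite support of `M`; once `q`
exceeds every `|e + n|`, the terms `X^v • T (f (X^(top - v) • x))` vanish, so `f x = 0`. -/

namespace MvPolynomial

variable {σ R : Type*} [CommSemiring R]

theorem weightedHomogeneousComponent_mul_of_mem {M : Type*} [AddCommGroup M] [DecidableEq M]
    {w : σ → M} {i : M} {a : MvPolynomial σ R} (ha : a ∈ weightedHomogeneousSubmodule R w i)
    (j : M) (b : MvPolynomial σ R) :
    weightedHomogeneousComponent w (i + j) (a * b) = a * weightedHomogeneousComponent w j b := by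
  let := weightedGradedAlgebra R w
  rw [← weightedDecomposition.decompose'_apply, ← weightedDecomposition.decompose'_apply]
  exact DirectSum.coe_decompose_mul_add_of_left_mem _ ha

section Exponents

variable [Finite σ] (q : ℕ)

def liftExp (w : σ → ZMod q) : σ →₀ ℕ := Finsupp.equivFunOnFinite.symm fun i => (w i).val

def topExp : σ →₀ ℕ := Finsupp.equivFunOnFinite.symm fun _ => q - 1

variable {q} [NeZero q]

theorem liftExp_lt (w : σ → ZMod q) (i : σ) : liftExp q w i < q := ZMod.val_lt (w i)

theorem topExp_lt (i : σ) : topExp q i < q := Nat.sub_lt (NeZero.pos q) one_pos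

theorem liftExp_le_topExp (w : σ → ZMod q) : liftExp q w ≤ topExp q := fun i =>
  Nat.le_pred_of_lt (liftExp_lt w i)

end Exponents

section Residue

variable [DecidableEq σ] (q : ℕ)

def residueWeight : σ → σ → ZMod q := fun i => Pi.single i 1

@[simp]
theorem weight_residueWeight_apply (d : σ →₀ ℕ) (i : σ) :
    Finsupp.weight (residueWeight q) d i = d i := by
  simp only [Finsupp.weight_apply, Finsupp.sum, residueWeight, nsmul_eq_mul, Finset.sum_apply,
    Pi.mul_apply, Pi.natCast_apply, Pi.single_apply, mul_ite, mul_one, mul_zero, Finset.sum_ite_eq,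
    Finsupp.mem_support_iff, ne_eq, ite_not, ite_eq_right_iff]
  exact fun h => by rw [h, Nat.cast_zero]

theorem pow_expChar_pow_mem_residueWeight_zero (p l : ℕ) [ExpChar R p] (a : MvPolynomial σ R) :
    a ^ p ^ l ∈ weightedHomogeneousSubmodule R (residueWeight (p ^ l)) 0 := by
  induction a using MvPolynomial.induction_on' with
  | monomial s c =>
    rw [monomial_pow]
    exact isWeightedHomogeneous_monomial _ _ _ (by ext i; simp)
  | add a b ha hb =>
    rw [add_pow_expChar_pow]
    exact Submodule.add_mem _ ha hb

def residueQuotient (v : σ →₀ ℕ) (r : MvPolynomial σ R) : MvPolynomial σ R :=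
  divMonomial
    (weightedHomogeneousComponent (residueWeight q) (Finsupp.weight (residueWeight q) v) r) v

theorem residueQuotient_add (v : σ →₀ ℕ) (r s : MvPolynomial σ R) :
    residueQuotient q v (r + s) = residueQuotient q v r + residueQuotient q v s := by
  rw [residueQuotient, map_add, add_divMonomial]
  rfl

variable {q}

theorem monomial_mul_residueQuotient {v : σ →₀ ℕ} (hv : ∀ i, v i < q)
    (r : MvPolynomial σ R) :
    monomial v 1 * residueQuotient q v r =
      weightedHomogeneousComponent (residueWeight q) (Finsupp.weight (residueWeight q) v) r := by
  classical
  set x := weightedHomogeneousComponent (residueWeight q) (Finsupp.weight (residueWeight q) v) r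
  suffices x.modMonomial v = 0 by
    rw [residueQuotient, ← modMonomial_add_divMonomial x v, this, zero_add]
  ext s
  by_cases hs : v ≤ s
  · rw [coeff_modMonomial_of_le _ hs, coeff_zero]
  · rw [coeff_modMonomial_of_not_le _ hs, coeff_zero, coeff_weightedHomogeneousComponent, if_neg]
    intro hw
    obtain ⟨i, hi⟩ : ∃ i, s i < v i := by simpa [Finsupp.le_def] using hs
    have := congrFun hw i
    rw [weight_residueWeight_apply, weight_residueWeight_apply, ZMod.natCast_eq_natCast_iff',
      Nat.mod_eq_of_lt (hi.trans (hv i)), Nat.mod_eq_of_lt (hv i)] at this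
    omega

theorem residueQuotient_mul_of_mem_zero {v : σ →₀ ℕ} (hv : ∀ i, v i < q)
    {a : MvPolynomial σ R} (ha : a ∈ weightedHomogeneousSubmodule R (residueWeight q) 0)
    (r : MvPolynomial σ R) :
    residueQuotient q v (a * r) = a * residueQuotient q v r := by
  classical
  rw [residueQuotient, ← zero_add (Finsupp.weight _ v),
    weightedHomogeneousComponent_mul_of_mem ha, ← monomial_mul_residueQuotient hv, mul_left_comm,
    divMonomial_monomial_mul]

theorem residueQuotient_monomial_mul (c v : σ →₀ ℕ) (r : MvPolynomial σ R) :
    residueQuotient q (c + v) (monomial c 1 * r) = residueQuotient q v r := by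
  classical
  rw [residueQuotient, map_add, weightedHomogeneousComponent_mul_of_mem
    (isWeightedHomogeneous_monomial _ _ _ rfl), divMonomial_add, divMonomial_monomial_mul,
    residueQuotient]

variable [Fintype σ] [NeZero q]

@[simp]
theorem weight_liftExp (w : σ → ZMod q) :
    Finsupp.weight (residueWeight q) (liftExp q w) = w := by
  ext i
  simp [liftExp]

@[simp]
theorem weight_topExp : Finsupp.weight (residueWeight q) (topExp q : σ →₀ ℕ) = -1 := by
  ext i
  simp [topExp, Nat.cast_pred (NeZero.pos q)]

theorem sum_monomial_mul_residueQuotient (r : MvPolynomial σ R) :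
    ∑ w : σ → ZMod q, monomial (liftExp q w) 1 * residueQuotient q (liftExp q w) r = r := by
  classical
  conv_rhs => rw [← sum_weightedHomogeneousComponent (residueWeight q) r,
    finsum_eq_sum_of_fintype]
  refine Finset.sum_congr rfl fun w _ => ?_
  rw [monomial_mul_residueQuotient (liftExp_lt w), weight_liftExp]

theorem residueQuotient_topExp_monomial_mul (w : σ → ZMod q) (r : MvPolynomial σ R) :
    residueQuotient q (topExp q) (monomial (topExp q - liftExp q w) 1 * r) =
      residueQuotient q (liftExp q w) r := by
  have := residueQuotient_monomial_mul (q := q) (topExp q - liftExp q w) (liftExp q w) r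
  rwa [tsub_add_cancel_of_le (liftExp_le_topExp w)] at this

theorem sum_monomial_mul_residueQuotient_topExp (r : MvPolynomial σ R) :
    ∑ w : σ → ZMod q, monomial (liftExp q w) 1 *
      residueQuotient q (topExp q) (monomial (topExp q - liftExp q w) 1 * r) = r := by
  simp_rw [residueQuotient_topExp_monomial_mul]
  exact sum_monomial_mul_residueQuotient r

theorem residueQuotient_topExp_eq_zero {a : ℕ} {r : MvPolynomial σ R} (hr : r.IsHomogeneous a)
    (ha : ¬ (q : ℤ) ∣ a + Fintype.card σ) : residueQuotient q (topExp q) r = 0 := by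
  rw [residueQuotient, weightedHomogeneousComponent_eq_zero', zero_divMonomial]
  intro d hd hw
  have hdeg : (a : ZMod q) = ∑ i, Finsupp.weight (residueWeight q) d i := by
    simp only [weight_residueWeight_apply, ← Nat.cast_sum, ← Finsupp.degree_eq_sum,
      hr.degree_eq_sum_deg_support hd, Finsupp.degree_apply]
  rw [hw, weight_topExp] at hdeg
  apply ha
  rw [← ZMod.intCast_zmod_eq_zero_iff_dvd]
  push_cast
  simp [hdeg]

end Residue

end MvPolynomial

theorem DirectSum.IsInternal.addMonoidHom_eq_zero {ι M S P : Type*} [DecidableEq ι]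
    [AddCommMonoid M] [SetLike S M] [AddSubmonoidClass S M] [AddCommMonoid P] {A : ι → S}
    (h : DirectSum.IsInternal A) (g : M →+ P) (hg : ∀ i, ∀ x ∈ A i, g x = 0) : g = 0 := by
  have : g.comp (DirectSum.coeAddMonoidHom A) = 0 :=
    DirectSum.addHom_ext fun i x => by
      rw [AddMonoidHom.comp_apply, DirectSum.coeAddMonoidHom_of]
      exact hg i x x.2
  ext x
  obtain ⟨y, rfl⟩ := h.surjective x
  exact DFunLike.congr_fun this y

theorem Set.Finite.exists_natAbs_add_lt_pow {S : Set ℤ} (hS : S.Finite) (c : ℤ) {p : ℕ}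
    (hp : 1 < p) : ∃ s : ℕ, ∀ d ∈ S, (d + c).natAbs < p ^ s := by
  classical
  refine ⟨hS.toFinset.sup fun d => (d + c).natAbs, fun d hd => ?_⟩
  exact (Finset.le_sup (f := fun d => (d + c).natAbs) (hS.mem_toFinset.mpr hd)).trans_lt
    (Nat.lt_pow_self hp)

section FrobeniusBaseChange

variable {k : Type} [Field k] {n p l : ℕ} [Fact p.Prime] [CharP k p]

theorem FrobTarget.smul_def (r : MvPolynomial (Fin n) k) (b : FrobTarget k n p l) :
    r • b = toT k n p l (r ^ p ^ l) * b := by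
  rw [Algebra.smul_def, RingHom.algebraMap_toAlgebra]
  rfl

variable (k n p l) in
def topQuotientHom : FrobTarget k n p l →ₗ[MvPolynomial (Fin n) k] FrobTarget k n p l where
  toFun b := toT k n p l (residueQuotient (p ^ l) (topExp (p ^ l)) b)
  map_add' := residueQuotient_add _ _
  map_smul' r b := by
    rw [FrobTarget.smul_def]
    exact residueQuotient_mul_of_mem_zero topExp_lt (pow_expChar_pow_mem_residueWeight_zero p l r) b

variable (N : Type) [AddCommGroup N] [Module (MvPolynomial (Fin n) k) N]

def Fstar.topQuotient : Fstar k n p l N →+ Fstar k n p l N :=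
  (LinearMap.rTensor N (topQuotientHom k n p l)).toAddMonoidHom

variable {N}

@[elab_as_elim]
theorem Fstar.induction_on {motive : Fstar k n p l N → Prop} (z : Fstar k n p l N)
    (zero : motive 0) (tmul : ∀ b y, motive (tensorMk k n p l N b y))
    (add : ∀ z z', motive z → motive z' → motive (z + z')) : motive z :=
  TensorProduct.induction_on z zero tmul add

theorem Fstar.topQuotient_tensorMk (b : FrobTarget k n p l) (y : N) :
    Fstar.topQuotient N (tensorMk k n p l N b y) =
      tensorMk k n p l N (topQuotientHom k n p l b) y :=
  rfl

theorem sum_tensorMk {ι : Type*} (s : Finset ι) (b : ι → FrobTarget k n p l) (y : N) :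
    tensorMk k n p l N (∑ i ∈ s, b i) y = ∑ i ∈ s, tensorMk k n p l N (b i) y :=
  TensorProduct.sum_tmul s b y

theorem smul_tensorMk (r : MvPolynomial (Fin n) k) (b : FrobTarget k n p l) (y : N) :
    r • tensorMk k n p l N b y = tensorMk k n p l N (toT k n p l r * b) y :=
  TensorProduct.smul_tmul' (toT k n p l r) b y

theorem Fstar.eq_sum_topQuotient (z : Fstar k n p l N) :
    z = ∑ w : Fin n → ZMod (p ^ l), (monomial (liftExp (p ^ l) w) 1 : MvPolynomial (Fin n) k) •
      Fstar.topQuotient N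
        ((monomial (topExp (p ^ l) - liftExp (p ^ l) w) 1 : MvPolynomial (Fin n) k) • z) := by
  induction z using Fstar.induction_on with
  | zero => simp
  | tmul b y =>
    simp only [smul_tensorMk, Fstar.topQuotient_tensorMk]
    rw [← sum_tensorMk]
    exact congrArg (tensorMk k n p l N · y) (sum_monomial_mul_residueQuotient_topExp b).symm
  | add z z' hz hz' =>
    simp only [smul_add, map_add, Finset.sum_add_distrib, ← hz, ← hz']

theorem Fstar.topQuotient_eq_zero_of_mem_fstarGrade {𝓝 : ℤ → AddSubgroup N} {d : ℤ}
    (hd : ¬ (p ^ l : ℤ) ∣ d + n) {z : Fstar k n p l N}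
    (hz : z ∈ FstarGrade k n p l N 𝓝 d) :
    Fstar.topQuotient N z = 0 := by
  induction hz using AddSubgroup.closure_induction with
  | mem z hz =>
    obtain ⟨a, b, r, y, hr, -, rfl, rfl⟩ := hz
    have ha : ¬ ((p ^ l : ℕ) : ℤ) ∣ a + Fintype.card (Fin n) := fun ha =>
      hd (by simpa [add_right_comm] using ha.add (dvd_mul_right ((p : ℤ) ^ l) b))
    rw [Fstar.topQuotient_tensorMk]
    change toT k n p l (residueQuotient _ _ r) ⊗ₜ y = 0
    rw [residueQuotient_topExp_eq_zero ((mem_homogeneousSubmodule a r).mp hr) ha]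
    exact TensorProduct.zero_tmul _ _
  | zero => exact map_zero _
  | add z z' _ _ hz hz' => rw [map_add, hz, hz', add_zero]
  | neg z _ hz => rw [map_neg, hz, neg_zero]

end FrobeniusBaseChange

/-- Let `k` be a field of characteristic `p > 0` and `R = k[x₁,…,xₙ]`,
graded by total degree.  Let `M` be a `ℤ`-graded `R`-module with `{d : M_d ≠ 0}` finite
and `M_{−n} = 0`.  Then there is `s ∈ ℕ` such that for every `l ≥ s` and every
`ℤ`-graded `R`-module `N`, the only degree-preserving `R`-linear map
`f : M → F^{*l}(N)` is the zero map. -/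
theorem statement4 (k : Type) [Field k] (p : ℕ) [Fact p.Prime] [CharP k p] (n : ℕ)
    (M : Type) [AddCommGroup M] [Module (MvPolynomial (Fin n) k) M]
    (𝓜 : ℤ → AddSubgroup M)
    (hMdec : DirectSum.IsInternal 𝓜)
    (hMsmul : ∀ (a : ℕ) (b : ℤ) (r : MvPolynomial (Fin n) k) (x : M),
      r ∈ homogeneousSubmodule (Fin n) k a → x ∈ 𝓜 b → r • x ∈ 𝓜 ((a : ℤ) + b))
    (hfin : {d : ℤ | 𝓜 d ≠ ⊥}.Finite)
    (hneg : 𝓜 (-(n : ℤ)) = ⊥) :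
    ∃ s : ℕ, ∀ l : ℕ, s ≤ l →
      ∀ (N : Type) [AddCommGroup N] [Module (MvPolynomial (Fin n) k) N]
        (𝓝 : ℤ → AddSubgroup N),
        DirectSum.IsInternal 𝓝 →
        (∀ (a : ℕ) (b : ℤ) (r : MvPolynomial (Fin n) k) (y : N),
          r ∈ homogeneousSubmodule (Fin n) k a → y ∈ 𝓝 b → r • y ∈ 𝓝 ((a : ℤ) + b)) →
        ∀ f : M →ₗ[MvPolynomial (Fin n) k] Fstar k n p l N,
          (∀ (d : ℤ) (x : M), x ∈ 𝓜 d → f x ∈ FstarGrade k n p l N 𝓝 d) →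
          f = 0 := by
  obtain ⟨s, hs⟩ := hfin.exists_natAbs_add_lt_pow n (Fact.out : p.Prime).one_lt
  refine ⟨s, fun l hl N _ _ 𝓝 _ _ f hf => ?_⟩
  have hdvd : ∀ d, 𝓜 d ≠ ⊥ → ¬ (p ^ l : ℤ) ∣ d + n := fun d hd hdvd => by
    have hlt : (d + n).natAbs < ((p : ℤ) ^ l).natAbs := by
      rw [Int.natAbs_pow, Int.natAbs_natCast]
      exact (hs d hd).trans_le (Nat.pow_le_pow_right (Fact.out : p.Prime).pos hl)
    exact hd (eq_neg_of_add_eq_zero_left (Int.eq_zero_of_dvd_of_natAbs_lt_natAbs hdvd hlt) ▸ hneg)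
  refine LinearMap.ext fun x => DFunLike.congr_fun
    (hMdec.addMonoidHom_eq_zero f.toAddMonoidHom fun d x hx => ?_) x
  rw [LinearMap.toAddMonoidHom_coe, Fstar.eq_sum_topQuotient (f x)]
  refine Finset.sum_eq_zero fun w _ => ?_
  set c : MvPolynomial (Fin n) k := monomial (topExp (p ^ l) - liftExp (p ^ l) w) 1
  have hcx : c • x ∈ 𝓜 _ := hMsmul _ d c x (isHomogeneous_monomial _ rfl) hx
  rw [← map_smul f c x]
  by_cases h0 : c • x = 0
  · rw [h0, map_zero, map_zero, smul_zero]
  · rw [Fstar.topQuotient_eq_zero_of_mem_fstarGrade (hdvd _ (ne_of_mem_of_not_mem' hcx h0))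
      (hf _ _ hcx), smul_zero]
end
end

section
/- Let k be a field of characteristic p > 0, R = k[x_1,…,x_n] graded by total degree, and m = (x_1,…,x_n) the maximal ideal generated by the variables. Let M be a ℤ-graded R-module admitting a degree-preserving R-linear isomorphism θ : M → F^{*1}(M) (i.e., M is a graded F-module). Then every homogeneous element x ∈ M_i with m·x = 0 and i ≠ −n is zero; that is, the socle of M is concentrated in degree −n. -/
open MvPolynomial TensorProduct

noncomputable section

/-!
Write `q = p ^ l`. Over itself via `r ↦ r ^ q`, `R = k[x₁,…,xₙ]` is free with basis the
`λ_b x^v`, where `λ_b` runs over a basis of `k` over `k ^ q` and `v ∈ [0, q)ⁿ`: the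
`(v, b)`-coordinate of `f` has as coefficient of `x^w` the `λ_b`-coordinate of the coefficient of
`x^(q w + v)` in `f`. Hence `F^{*l}(M) ≅ ⊕_{(v, b)} M`, and the `(v, b)`-coordinate sends degree
`q e + |v|` to degree `e`. The `(v + e_j)`-coordinate of `x_j z` is the `v`-coordinate of `z`, and
if `v_j = q - 1`, the `(v - v_j e_j)`-coordinate of `x_j z` is `x_j` times the `v`-coordinate of
`z`. So if `m x = 0`, all coordinates of `θ x` vanish except those at `v = (q - 1, …, q - 1)`,
which are again killed by `m` and have degree `e` with `q (e + n) = i + n`. As `|e + n| < |i + n|`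
when `i ≠ -n`, induction on `|i + n|` gives `θ x = 0`.
-/
namespace FrobeniusBasis

open Module

/-- `k` as a vector space over itself through `s • c = s ^ p ^ l * c`: a basis of it is a basis
of `k` over its subfield `k ^ p ^ l`. -/
def FrobTwist (k : Type) (_p _l : ℕ) : Type := k

section Twist

variable (k : Type) [Field k] (p : ℕ) [Fact p.Prime] [CharP k p] (l : ℕ)

instance : AddCommGroup (FrobTwist k p l) := inferInstanceAs (AddCommGroup k)

instance : Module k (FrobTwist k p l) := Module.compHom k (iterateFrobenius k p l)

def toTwist : k ≃+ FrobTwist k p l := AddEquiv.refl k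

lemma toTwist_pow_mul (s c : k) : toTwist k p l (s ^ p ^ l * c) = s • toTwist k p l c := by
  show _ = iterateFrobenius k p l s * c
  rw [iterateFrobenius_def]
  rfl

abbrev TwistIdx : Type := Basis.ofVectorSpaceIndex k (FrobTwist k p l)

def twistBasis : Basis (TwistIdx k p l) k (FrobTwist k p l) :=
  Basis.ofVectorSpace k (FrobTwist k p l)

def twistCoord (b : TwistIdx k p l) : k →+ k :=
  (Finsupp.applyAddHom b).comp ((twistBasis k p l).repr.toAddMonoidHom.comp (toTwist k p l))

variable {k p l}

lemma twistCoord_apply (b : TwistIdx k p l) (c : k) :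
    twistCoord k p l b c = (twistBasis k p l).repr (toTwist k p l c) b := rfl

lemma twistCoord_pow_mul (b : TwistIdx k p l) (s c : k) :
    twistCoord k p l b (s ^ p ^ l * c) = s * twistCoord k p l b c := by
  rw [twistCoord_apply, twistCoord_apply, toTwist_pow_mul, map_smul, Finsupp.smul_apply,
    smul_eq_mul]

lemma twistCoord_twistBasis (b b' : TwistIdx k p l) :
    twistCoord k p l b ((toTwist k p l).symm (twistBasis k p l b')) = Finsupp.single b' 1 b := by
  rw [twistCoord_apply, AddEquiv.apply_symm_apply, Basis.repr_self]

lemma sum_twistCoord (c : k) :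
    ((twistBasis k p l).repr (toTwist k p l c)).sum
      (fun b s => s ^ p ^ l * (toTwist k p l).symm (twistBasis k p l b)) = c := by
  apply (toTwist k p l).injective
  conv_rhs => rw [← (twistBasis k p l).linearCombination_repr (toTwist k p l c)]
  rw [Finsupp.linearCombination_apply, map_finsuppSum]
  refine Finsupp.sum_congr fun b _ => ?_
  rw [toTwist_pow_mul, AddEquiv.apply_symm_apply]

end Twist

section Coeff

variable (k : Type) [Field k] (p : ℕ) [Fact p.Prime] [CharP k p] (l : ℕ) {σ : Type*}

def frobCoeff (c : σ →₀ ℕ) (b : TwistIdx k p l) : MvPolynomial σ k →+ MvPolynomial σ k :=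
  AddMonoidAlgebra.coeffAddEquiv.symm.toAddMonoidHom.comp
    ((Finsupp.mapRange.addMonoidHom (twistCoord k p l b)).comp
      ((Finsupp.comapDomain.addMonoidHom ((add_left_injective c).comp
        (smul_right_injective _ (pow_ne_zero l (Fact.out : p.Prime).ne_zero)))).comp
        AddMonoidAlgebra.coeffAddEquiv.toAddMonoidHom))

variable {k p l}

lemma coeff_frobCoeff (c : σ →₀ ℕ) (b : TwistIdx k p l) (f : MvPolynomial σ k)
    (w : σ →₀ ℕ) :
    coeff w (frobCoeff k p l c b f) = twistCoord k p l b (coeff (p ^ l • w + c) f) :=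
  rfl

lemma frobCoeff_add_monomial_one_mul (c s : σ →₀ ℕ) (b : TwistIdx k p l)
    (f : MvPolynomial σ k) :
    frobCoeff k p l (c + s) b (monomial s 1 * f) = frobCoeff k p l c b f := by
  ext w
  rw [coeff_frobCoeff, coeff_frobCoeff, ← add_assoc, add_comm _ s, coeff_monomial_mul, one_mul]

lemma frobCoeff_pow_mul {c : σ →₀ ℕ} (hc : ∀ i, c i < p ^ l) (b : TwistIdx k p l)
    (r f : MvPolynomial σ k) :
    frobCoeff k p l c b (r ^ p ^ l * f) = r * frobCoeff k p l c b f := by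
  induction r using MvPolynomial.induction_on' with
  | add r₁ r₂ h₁ h₂ => rw [add_pow_char_pow, add_mul, map_add, h₁, h₂, add_mul]
  | monomial s a =>
    ext w
    rw [monomial_pow, coeff_frobCoeff, coeff_monomial_mul', coeff_monomial_mul',
      coeff_frobCoeff]
    have hle : p ^ l • s ≤ p ^ l • w + c ↔ s ≤ w := by
      simp only [Finsupp.le_def, Finsupp.add_apply, Finsupp.smul_apply, smul_eq_mul]
      refine forall_congr' fun i => ⟨fun h => ?_, fun h => ?_⟩
      · by_contra hlt
        have : p ^ l * (w i + 1) ≤ p ^ l * s i := Nat.mul_le_mul_left _ (by omega)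
        linarith [hc i]
      · linarith [Nat.mul_le_mul_left (p ^ l) h]
    by_cases hs : s ≤ w
    · have hsub : p ^ l • w + c - p ^ l • s = p ^ l • (w - s) + c := by
        ext i
        simp only [Finsupp.add_apply, Finsupp.smul_apply, Finsupp.tsub_apply, smul_eq_mul,
          Nat.mul_sub]
        have : p ^ l * s i ≤ p ^ l * w i := Nat.mul_le_mul_left _ (hs i)
        omega
      rw [if_pos (hle.2 hs), if_pos hs, hsub, twistCoord_pow_mul]
    · rw [if_neg (mt hle.1 hs), if_neg hs, map_zero]

lemma frobCoeff_X_mul {c : σ →₀ ℕ} (j : σ)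
    (hc : ∀ i, (c + Finsupp.single j (p ^ l - 1)) i < p ^ l) (b : TwistIdx k p l)
    (f : MvPolynomial σ k) :
    frobCoeff k p l c b (X j * f)
      = X j * frobCoeff k p l (c + Finsupp.single j (p ^ l - 1)) b f := by
  have hq : p ^ l - 1 + 1 = p ^ l :=
    Nat.sub_add_cancel (Nat.one_le_pow _ _ (Fact.out : p.Prime).pos)
  rw [← frobCoeff_pow_mul hc, ← frobCoeff_add_monomial_one_mul c (Finsupp.single j (p ^ l - 1)),
    ← mul_assoc, ← X_pow_eq_monomial, ← pow_succ, hq]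

lemma degree_eq_of_coeff_frobCoeff_ne_zero {f : MvPolynomial σ k} {a : ℕ}
    (hf : f.IsHomogeneous a) {c : σ →₀ ℕ} {b : TwistIdx k p l} {w : σ →₀ ℕ}
    (hw : coeff w (frobCoeff k p l c b f) ≠ 0) :
    p ^ l * w.degree + c.degree = a := by
  rw [coeff_frobCoeff] at hw
  have := not_imp_comm.1 hf.coeff_eq_zero fun h => hw (by rw [h, map_zero])
  rwa [map_add, map_nsmul, smul_eq_mul] at this

lemma isHomogeneous_frobCoeff {f : MvPolynomial σ k} {a e : ℕ} (hf : f.IsHomogeneous a)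
    {c : σ →₀ ℕ} (he : p ^ l * e + c.degree = a) (b : TwistIdx k p l) :
    (frobCoeff k p l c b f).IsHomogeneous e := by
  intro w hw
  have h := degree_eq_of_coeff_frobCoeff_ne_zero hf hw
  show Finsupp.weight (fun _ => 1) w = e
  rw [← Finsupp.degree_eq_weight_one]
  exact Nat.eq_of_mul_eq_mul_left (pow_pos (Fact.out : p.Prime).pos l) (by omega)

lemma frobCoeff_eq_zero_of_isHomogeneous {f : MvPolynomial σ k} {a : ℕ} (hf : f.IsHomogeneous a)
    {c : σ →₀ ℕ} (ha : ¬ (p ^ l : ℤ) ∣ a - c.degree) (b : TwistIdx k p l) :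
    frobCoeff k p l c b f = 0 := by
  ext w
  by_contra hw
  refine ha ⟨w.degree, ?_⟩
  rw [← degree_eq_of_coeff_frobCoeff_ne_zero hf hw]
  push_cast
  ring

end Coeff

section Basis

variable {p n l : ℕ}

def expVec (v : Fin n → Fin (p ^ l)) : Fin n →₀ ℕ :=
  Finsupp.equivFunOnFinite.symm fun j => (v j : ℕ)

@[simp]
lemma expVec_apply (v : Fin n → Fin (p ^ l)) (j : Fin n) : expVec v j = v j := rfl

lemma expVec_eq_smul_add_expVec_iff {v v' : Fin n → Fin (p ^ l)} {w : Fin n →₀ ℕ} :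
    expVec v' = p ^ l • w + expVec v ↔ w = 0 ∧ v' = v := by
  constructor
  · intro h
    have hj : ∀ j, w j = 0 ∧ (v' j : ℕ) = v j := fun j => by
      have h1 := DFunLike.congr_fun h j
      simp only [expVec_apply, Finsupp.add_apply, Finsupp.smul_apply, smul_eq_mul] at h1
      have h2 := (v' j).isLt
      rcases Nat.eq_zero_or_pos (w j) with h3 | h3
      · simp_all
      · nlinarith
    exact ⟨Finsupp.ext fun j => (hj j).1, funext fun j => Fin.ext (hj j).2⟩
  · rintro ⟨rfl, rfl⟩
    simp

abbrev FrobIdx (k : Type) [Field k] (p : ℕ) [Fact p.Prime] [CharP k p] (n l : ℕ) : Type :=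
  (Fin n → Fin (p ^ l)) × TwistIdx k p l

variable {k : Type} [Field k] [Fact p.Prime] [CharP k p]

lemma smul_toT (r f : MvPolynomial (Fin n) k) :
    r • toT k n p l f = toT k n p l (r ^ p ^ l * f) := by
  rw [Algebra.smul_def, RingHom.algebraMap_toAlgebra]
  show toT k n p l (iterateFrobenius _ p l r) * toT k n p l f = _
  rw [iterateFrobenius_def]
  rfl

def frobCoord (ι : FrobIdx k p n l) :
    FrobTarget k n p l →ₗ[MvPolynomial (Fin n) k] MvPolynomial (Fin n) k where
  toFun f := frobCoeff k p l (expVec ι.1) ι.2 f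
  map_add' := map_add _
  map_smul' r f := (congrArg (frobCoeff k p l (expVec ι.1) ι.2) (smul_toT r f)).trans
    (frobCoeff_pow_mul (fun j => (ι.1 j).isLt) ι.2 r f)

lemma frobCoord_toT (ι : FrobIdx k p n l) (f : MvPolynomial (Fin n) k) :
    frobCoord ι (toT k n p l f) = frobCoeff k p l (expVec ι.1) ι.2 f := rfl

def frobBasisVec (ι : FrobIdx k p n l) : FrobTarget k n p l :=
  toT k n p l (monomial (expVec ι.1) ((toTwist k p l).symm (twistBasis k p l ι.2)))

lemma frobCoord_frobBasisVec (ι κ : FrobIdx k p n l) :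
    frobCoord ι (frobBasisVec κ) = Finsupp.single κ 1 ι := by
  classical
  ext w
  rw [frobBasisVec, frobCoord_toT, coeff_frobCoeff, coeff_monomial]
  by_cases h : κ = ι
  · subst h
    rw [Finsupp.single_eq_same, coeff_one]
    by_cases hw : w = 0
    · subst hw
      simp [twistCoord_twistBasis]
    · rw [if_neg (Ne.symm hw), if_neg fun hv => hw (expVec_eq_smul_add_expVec_iff.1 hv).1,
        map_zero]
  · rw [Finsupp.single_eq_of_ne' h, coeff_zero]
    split_ifs with hw
    · obtain ⟨rfl, hv⟩ := expVec_eq_smul_add_expVec_iff.1 hw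
      have hb : κ.2 ≠ ι.2 := fun hb => h (Prod.ext hv hb)
      rw [twistCoord_twistBasis, Finsupp.single_eq_of_ne' hb]
    · exact map_zero _

lemma frobCoord_linearCombination (ι : FrobIdx k p n l)
    (g : FrobIdx k p n l →₀ MvPolynomial (Fin n) k) :
    frobCoord ι (Finsupp.linearCombination _ frobBasisVec g) = g ι := by
  induction g using Finsupp.induction_linear with
  | zero => simp
  | add g g' hg hg' => rw [map_add, map_add, hg, hg', Finsupp.add_apply]
  | single κ r =>
    rw [Finsupp.linearCombination_single, map_smul, frobCoord_frobBasisVec, smul_eq_mul,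
      ← smul_eq_mul, ← Finsupp.smul_apply, Finsupp.smul_single_one]

lemma linearIndependent_frobBasisVec :
    LinearIndependent (MvPolynomial (Fin n) k) (frobBasisVec (k := k) (p := p) (n := n) (l := l)) :=
  linearIndependent_iff.2 fun g hg => Finsupp.ext fun ι => by
    rw [← frobCoord_linearCombination ι g, hg, map_zero, Finsupp.zero_apply]

lemma toT_monomial_mem_span (u : Fin n →₀ ℕ) (c : k) :
    toT k n p l (monomial u c) ∈
      Submodule.span (MvPolynomial (Fin n) k) (Set.range frobBasisVec) := by
  have hq : 0 < p ^ l := pow_pos (Fact.out : p.Prime).pos l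
  let v : Fin n → Fin (p ^ l) := fun j => ⟨u j % p ^ l, Nat.mod_lt _ hq⟩
  let d : Fin n →₀ ℕ := u.mapRange (· / p ^ l) (Nat.zero_div _)
  have hu : p ^ l • d + expVec v = u := Finsupp.ext fun j => Nat.div_add_mod (u j) (p ^ l)
  rw [← sum_twistCoord (p := p) (l := l) c, Finsupp.sum, map_sum]
  show ∑ b ∈ _, toT k n p l _ ∈ _
  refine Submodule.sum_mem _ fun b _ => ?_
  have hb : toT k n p l (monomial u ((twistBasis k p l).repr (toTwist k p l c) b ^ p ^ l *
        (toTwist k p l).symm (twistBasis k p l b)))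
      = monomial d ((twistBasis k p l).repr (toTwist k p l c) b) • frobBasisVec (v, b) := by
    rw [frobBasisVec, smul_toT, monomial_pow, monomial_mul, hu]
  rw [hb]
  exact Submodule.smul_mem _ _ (Submodule.subset_span ⟨_, rfl⟩)

lemma top_le_span_frobBasisVec :
    ⊤ ≤ Submodule.span (MvPolynomial (Fin n) k)
      (Set.range (frobBasisVec (k := k) (p := p) (n := n) (l := l))) := by
  rintro f -
  induction (f : MvPolynomial (Fin n) k) using MvPolynomial.induction_on' with
  | monomial u c => exact toT_monomial_mem_span u c
  | add f g hf hg => exact Submodule.add_mem _ hf hg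

def frobBasis : Basis (FrobIdx k p n l) (MvPolynomial (Fin n) k) (FrobTarget k n p l) :=
  .mk linearIndependent_frobBasisVec top_le_span_frobBasisVec

lemma frobBasis_repr (f : FrobTarget k n p l) (ι : FrobIdx k p n l) :
    frobBasis.repr f ι = frobCoord ι f := by
  have h : frobBasis.coord ι = frobCoord ι := frobBasis.ext fun κ => by
    rw [Basis.coord_apply, Basis.repr_self, frobBasis, Basis.mk_apply,
      frobCoord_frobBasisVec]
  exact LinearMap.congr_fun h f

lemma frobCoord_X_mul {v v' : Fin n → Fin (p ^ l)} {j : Fin n}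
    (hv : expVec v' = expVec v + Finsupp.single j 1) (b : TwistIdx k p l)
    (f : MvPolynomial (Fin n) k) :
    frobCoord (v', b) (toT k n p l (X j * f)) = frobCoord (v, b) (toT k n p l f) := by
  rw [frobCoord_toT, frobCoord_toT, hv]
  exact frobCoeff_add_monomial_one_mul _ _ b f

lemma frobCoord_X_mul_eq_X_mul {v v' : Fin n → Fin (p ^ l)} {j : Fin n}
    (hv : expVec v = expVec v' + Finsupp.single j (p ^ l - 1)) (b : TwistIdx k p l)
    (f : MvPolynomial (Fin n) k) :
    frobCoord (v', b) (toT k n p l (X j * f)) = X j * frobCoord (v, b) (toT k n p l f) := by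
  rw [frobCoord_toT, frobCoord_toT, hv]
  exact frobCoeff_X_mul j (fun i => hv ▸ (v i).isLt) b f

end Basis

section Fstar

variable {k : Type} [Field k] {p : ℕ} [Fact p.Prime] [CharP k p] {n l : ℕ}
variable (M : Type) [AddCommGroup M] [Module (MvPolynomial (Fin n) k) M]

open scoped Classical in
def fstarCoord (ι : FrobIdx k p n l) : Fstar k n p l M →+ M :=
  (Finsupp.applyAddHom ι).comp
    (TensorProduct.equivFinsuppOfBasisLeft frobBasis).toLinearMap.toAddMonoidHom

variable {M}

lemma fstarCoord_tmul (ι : FrobIdx k p n l) (f : MvPolynomial (Fin n) k) (y : M) :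
    fstarCoord M ι (tensorMk k n p l M (toT k n p l f) y)
      = frobCoord ι (toT k n p l f) • y := by
  classical
  show TensorProduct.equivFinsuppOfBasisLeft frobBasis
    (toT k n p l f ⊗ₜ[MvPolynomial (Fin n) k] y) ι = _
  rw [TensorProduct.equivFinsuppOfBasisLeft_apply_tmul, Finsupp.mapRange_apply, frobBasis_repr]

lemma eq_zero_of_forall_fstarCoord_eq_zero {z : Fstar k n p l M}
    (h : ∀ ι : FrobIdx k p n l, fstarCoord M ι z = 0) : z = 0 := by
  classical
  exact (TensorProduct.equivFinsuppOfBasisLeft frobBasis).map_eq_zero_iff.1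
    (Finsupp.ext fun ι => h ι)

lemma smul_tensorMk (r f : MvPolynomial (Fin n) k) (y : M) :
    r • tensorMk k n p l M (toT k n p l f) y = tensorMk k n p l M (toT k n p l (r * f)) y := by
  show toT k n p l r • (toT k n p l f ⊗ₜ[MvPolynomial (Fin n) k] y) = _
  rw [TensorProduct.smul_tmul']
  rfl

lemma Fstar.induction_on {P : Fstar k n p l M → Prop} (z : Fstar k n p l M) (zero : P 0)
    (tmul : ∀ (f : MvPolynomial (Fin n) k) (y : M), P (tensorMk k n p l M (toT k n p l f) y))
    (add : ∀ z z', P z → P z' → P (z + z')) : P z :=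
  TensorProduct.induction_on z zero tmul add

lemma fstarCoord_smul_of_frobCoord {ι ι' : FrobIdx k p n l} {s r : MvPolynomial (Fin n) k}
    (h : ∀ f, frobCoord ι' (toT k n p l (s * f)) = r * frobCoord ι (toT k n p l f))
    (z : Fstar k n p l M) :
    fstarCoord M ι' (s • z) = r • fstarCoord M ι z := by
  induction z using Fstar.induction_on with
  | zero => rw [smul_zero, map_zero, map_zero, smul_zero]
  | tmul f y => rw [smul_tensorMk, fstarCoord_tmul, fstarCoord_tmul, h, mul_smul]
  | add z z' hz hz' => rw [smul_add, map_add, map_add, hz, hz', smul_add]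

lemma fstarCoord_eq_zero_of_ne_topIdx {z : Fstar k n p l M}
    (hz : ∀ j, (X j : MvPolynomial (Fin n) k) • z = 0) {v : Fin n → Fin (p ^ l)}
    (hv : v ≠ topIdx n p l) (b : TwistIdx k p l) : fstarCoord M (v, b) z = 0 := by
  obtain ⟨j, hj⟩ := Function.ne_iff.1 hv
  have hlt : (v j : ℕ) + 1 < p ^ l := by
    have := (v j).isLt
    simp only [topIdx, ne_eq, Fin.ext_iff] at hj
    omega
  have hv' : expVec (Function.update v j ⟨v j + 1, hlt⟩) = expVec v + Finsupp.single j 1 := by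
    ext i
    rcases eq_or_ne i j with rfl | hi
    · simp
    · simp [hi, Finsupp.single_eq_of_ne' hi.symm]
  have key := fstarCoord_smul_of_frobCoord (M := M) (r := 1)
    (fun f => (frobCoord_X_mul hv' b f).trans (one_mul _).symm) z
  rwa [hz, map_zero, one_smul, eq_comm] at key

lemma X_smul_fstarCoord_topIdx_eq_zero {z : Fstar k n p l M}
    (hz : ∀ j, (X j : MvPolynomial (Fin n) k) • z = 0) (j : Fin n) (b : TwistIdx k p l) :
    (X j : MvPolynomial (Fin n) k) • fstarCoord M (topIdx n p l, b) z = 0 := by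
  have hv' : expVec (topIdx n p l) = expVec (Function.update (topIdx n p l) j
      ⟨0, pow_pos (Fact.out : p.Prime).pos l⟩) + Finsupp.single j (p ^ l - 1) := by
    ext i
    rcases eq_or_ne i j with rfl | hi
    · simp [topIdx]
    · simp [hi, Finsupp.single_eq_of_ne' hi.symm]
  rw [← fstarCoord_smul_of_frobCoord (frobCoord_X_mul_eq_X_mul hv' b), hz, map_zero]

lemma degree_expVec_topIdx :
    ((expVec (topIdx n p l)).degree : ℤ) = n * ((p : ℤ) ^ l - 1) := by
  rw [Finsupp.degree_eq_sum]
  simp [topIdx, Nat.cast_sub (Nat.one_le_pow _ _ (Fact.out : p.Prime).pos)]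

variable {𝓜 : ℤ → AddSubgroup M}

lemma frobCoeff_smul_mem
    (hM : ∀ (a : ℕ) (b : ℤ) (r : MvPolynomial (Fin n) k) (x : M),
      r ∈ homogeneousSubmodule (Fin n) k a → x ∈ 𝓜 b → r • x ∈ 𝓜 ((a : ℤ) + b))
    {r : MvPolynomial (Fin n) k} {a : ℕ} (hr : r.IsHomogeneous a) {y : M}
    {d : ℤ} (hy : y ∈ 𝓜 d) {c : Fin n →₀ ℕ} {e : ℤ}
    (he : (p : ℤ) ^ l * e + c.degree = a + (p : ℤ) ^ l * d) (b : TwistIdx k p l) :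
    frobCoeff k p l c b r • y ∈ 𝓜 e := by
  by_cases h0 : frobCoeff k p l c b r = 0
  · rw [h0, zero_smul]
    exact zero_mem _
  obtain ⟨w, hw⟩ := ne_zero_iff.1 h0
  have hdeg := degree_eq_of_coeff_frobCoeff_ne_zero hr hw
  have hmem := hM _ _ _ _ ((mem_homogeneousSubmodule _ _).2 (isHomogeneous_frobCoeff hr hdeg b)) hy
  convert hmem using 2
  have hq : (p : ℤ) ^ l ≠ 0 := pow_ne_zero _ (Nat.cast_ne_zero.2 (Fact.out : p.Prime).ne_zero)
  refine mul_left_cancel₀ hq ?_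
  have hdeg' : (p : ℤ) ^ l * w.degree + c.degree = a := by exact_mod_cast hdeg
  linear_combination he - hdeg'

lemma fstarCoord_mem_of_mem_fstarGrade
    (hM : ∀ (a : ℕ) (b : ℤ) (r : MvPolynomial (Fin n) k) (x : M),
      r ∈ homogeneousSubmodule (Fin n) k a → x ∈ 𝓜 b → r • x ∈ 𝓜 ((a : ℤ) + b))
    {d e : ℤ} {v : Fin n → Fin (p ^ l)}
    (he : (p : ℤ) ^ l * e + (expVec v).degree = d) (b : TwistIdx k p l) {z : Fstar k n p l M}
    (hz : z ∈ FstarGrade k n p l M 𝓜 d) : fstarCoord M (v, b) z ∈ 𝓜 e := by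
  refine (AddSubgroup.closure_le (K := (𝓜 e).comap (fstarCoord M (v, b)))).2 ?_ hz
  rintro _ ⟨a, d', r, y, hr, hy, hd, rfl⟩
  rw [SetLike.mem_coe, AddSubgroup.mem_comap, fstarCoord_tmul, frobCoord_toT]
  exact frobCoeff_smul_mem hM ((mem_homogeneousSubmodule _ _).1 hr) hy (he.trans hd.symm) b

lemma fstarCoord_eq_zero_of_mem_fstarGrade {d : ℤ} {v : Fin n → Fin (p ^ l)}
    (hd : ¬ (p : ℤ) ^ l ∣ d - (expVec v).degree) (b : TwistIdx k p l) {z : Fstar k n p l M}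
    (hz : z ∈ FstarGrade k n p l M 𝓜 d) : fstarCoord M (v, b) z = 0 := by
  refine (AddSubgroup.closure_le (K := (⊥ : AddSubgroup M).comap (fstarCoord M (v, b)))).2 ?_ hz
  rintro _ ⟨a, d', r, y, hr, -, rfl, rfl⟩
  rw [SetLike.mem_coe, AddSubgroup.mem_comap, AddSubgroup.mem_bot, fstarCoord_tmul,
    frobCoord_toT, frobCoeff_eq_zero_of_isHomogeneous ((mem_homogeneousSubmodule _ _).1 hr)
      (fun ⟨m, hm⟩ => hd ⟨m + d', by linear_combination hm⟩) b, zero_smul]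

theorem eq_zero_of_forall_X_smul_eq_zero
    (hM : ∀ (a : ℕ) (b : ℤ) (r : MvPolynomial (Fin n) k) (x : M),
      r ∈ homogeneousSubmodule (Fin n) k a → x ∈ 𝓜 b → r • x ∈ 𝓜 ((a : ℤ) + b))
    (hl : l ≠ 0)
    (θ : M ≃ₗ[MvPolynomial (Fin n) k] Fstar k n p l M)
    (hθ : ∀ (d : ℤ) (x : M), x ∈ 𝓜 d → θ x ∈ FstarGrade k n p l M 𝓜 d)
    {i : ℤ} (hi : i ≠ -(n : ℤ)) {x : M} (hx : x ∈ 𝓜 i)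
    (hX : ∀ j, (X j : MvPolynomial (Fin n) k) • x = 0) : x = 0 := by
  induction h : (i + n).natAbs using Nat.strong_induction_on generalizing i x with
  | _ N ih =>
    have hz : ∀ j, (X j : MvPolynomial (Fin n) k) • θ x = 0 := fun j => by
      rw [← map_smul, hX j, map_zero]
    rw [← θ.map_eq_zero_iff]
    refine eq_zero_of_forall_fstarCoord_eq_zero fun ⟨v, b⟩ => ?_
    by_cases hv : v = topIdx n p l
    swap
    · exact fstarCoord_eq_zero_of_ne_topIdx hz hv b
    subst hv
    by_cases hd : (p : ℤ) ^ l ∣ i - (expVec (topIdx n p l)).degree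
    swap
    · exact fstarCoord_eq_zero_of_mem_fstarGrade hd b (hθ i x hx)
    obtain ⟨e, he⟩ := hd
    have hen : (p : ℤ) ^ l * (e + n) = i + n := by
      rw [degree_expVec_topIdx] at he
      linear_combination -he
    have hq : 1 < p ^ l := Nat.one_lt_pow hl (Fact.out : p.Prime).one_lt
    have hen0 : e + n ≠ 0 := fun h0 => hi (by linear_combination -hen + (p : ℤ) ^ l * h0)
    have hlt : (e + n).natAbs < N := by
      rw [← h, ← hen, Int.natAbs_mul, Int.natAbs_pow, Int.natAbs_natCast]
      exact lt_mul_left (Int.natAbs_pos.2 hen0) hq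
    exact ih _ hlt (by omega) (fstarCoord_mem_of_mem_fstarGrade hM (by linear_combination -he) b
      (hθ i x hx)) (X_smul_fstarCoord_topIdx_eq_zero hz · b) rfl

end Fstar

end FrobeniusBasis

theorem statement5_general (k : Type) [Field k] (p : ℕ) [Fact p.Prime] [CharP k p] (n : ℕ)
    (M : Type) [AddCommGroup M] [Module (MvPolynomial (Fin n) k) M]
    (𝓜 : ℤ → AddSubgroup M)
    (hMsmul : ∀ (a : ℕ) (b : ℤ) (r : MvPolynomial (Fin n) k) (x : M),
      r ∈ homogeneousSubmodule (Fin n) k a → x ∈ 𝓜 b → r • x ∈ 𝓜 ((a : ℤ) + b))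
    (θ : M ≃ₗ[MvPolynomial (Fin n) k] Fstar k n p 1 M)
    (hθ : ∀ (d : ℤ) (x : M), x ∈ 𝓜 d → θ x ∈ FstarGrade k n p 1 M 𝓜 d)
    (i : ℤ) (hi : i ≠ -(n : ℤ)) (x : M) (hx : x ∈ 𝓜 i)
    (hsoc : ∀ r ∈ Ideal.span (Set.range (X : Fin n → MvPolynomial (Fin n) k)), r • x = 0) :
    x = 0 :=
  FrobeniusBasis.eq_zero_of_forall_X_smul_eq_zero hMsmul one_ne_zero θ hθ hi hx
    fun j => hsoc _ (Ideal.subset_span ⟨j, rfl⟩)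

/-- Let `k` be a field of characteristic `p > 0`, `R = k[x₁,…,xₙ]`
graded by total degree, and `m = (x₁,…,xₙ)`.  Let `M` be a `ℤ`-graded `R`-module with a
degree-preserving `R`-linear isomorphism `θ : M → F^{*1}(M)` (a graded `F`-module).
Then every homogeneous `x ∈ M_i` with `m·x = 0` and `i ≠ −n` is zero; i.e. the socle
of `M` is concentrated in degree `−n`. -/
theorem statement5 (k : Type) [Field k] (p : ℕ) [Fact p.Prime] [CharP k p] (n : ℕ)
    (M : Type) [AddCommGroup M] [Module (MvPolynomial (Fin n) k) M]
    (𝓜 : ℤ → AddSubgroup M)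
    (hMdec : DirectSum.IsInternal 𝓜)
    (hMsmul : ∀ (a : ℕ) (b : ℤ) (r : MvPolynomial (Fin n) k) (x : M),
      r ∈ homogeneousSubmodule (Fin n) k a → x ∈ 𝓜 b → r • x ∈ 𝓜 ((a : ℤ) + b))
    (θ : M ≃ₗ[MvPolynomial (Fin n) k] Fstar k n p 1 M)
    (hθ : ∀ (d : ℤ) (x : M), x ∈ 𝓜 d → θ x ∈ FstarGrade k n p 1 M 𝓜 d)
    (i : ℤ) (hi : i ≠ -(n : ℤ)) (x : M) (hx : x ∈ 𝓜 i)
    (hsoc : ∀ r ∈ Ideal.span (Set.range (X : Fin n → MvPolynomial (Fin n) k)), r • x = 0) :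
    x = 0 :=
  statement5_general k p n M 𝓜 hMsmul θ hθ i hi x hx hsoc
end
end

section
/- Let k be a perfect field of characteristic p > 0, R = k[x_1,…,x_n] graded by total degree, and let d ∈ ℤ with d ≠ −n. Then there exists s ∈ ℕ such that for every l ≥ s and every ℤ-graded R-module N, the degree-d component of F^{*l}(N) is contained in the additive span of the elements e_ī ⊗ y with ī ≠ \overline{p^l−1} (equivalently, every element of the degree-d component of F^{*l}(N) has zero e_{\overline{p^l−1}}-coordinate in the basis expansion). -/
open MvPolynomial TensorProduct

noncomputable section

/-- Let `k` be a perfect field of characteristic `p > 0`,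
`R = k[x₁,…,xₙ]` graded by total degree, and `d ∈ ℤ` with `d ≠ −n`.  Then there is
`s ∈ ℕ` such that for every `l ≥ s` and every `ℤ`-graded `R`-module `N`, the degree-`d`
component of `F^{*l}(N)` is contained in the additive span of the elements `e_v ⊗ y`
with `v ≠ (p^l−1,…,p^l−1)`; equivalently, every element of the degree-`d` component of
`F^{*l}(N)` has zero `e_{(p^l−1,…,p^l−1)}`-coordinate in the basis expansion. -/
theorem statement8 (k : Type) [Field k] [PerfectField k] (p : ℕ) [Fact p.Prime] [CharP k p]
    (n : ℕ) (d : ℤ) (hd : d ≠ -(n : ℤ)) :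
    ∃ s : ℕ, ∀ l : ℕ, s ≤ l →
      ∀ (N : Type) [AddCommGroup N] [Module (MvPolynomial (Fin n) k) N]
        (𝓝 : ℤ → AddSubgroup N),
        DirectSum.IsInternal 𝓝 →
        (∀ (a : ℕ) (b : ℤ) (r : MvPolynomial (Fin n) k) (y : N),
          r ∈ homogeneousSubmodule (Fin n) k a → y ∈ 𝓝 b → r • y ∈ 𝓝 ((a : ℤ) + b)) →
        FstarGrade k n p l N 𝓝 d ≤
          AddSubgroup.closure { z : Fstar k n p l N |
            ∃ v : Fin n → Fin (p ^ l), v ≠ topIdx n p l ∧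
              ∃ y : N, z = tensorMk k n p l N (eMono k n p l fun j => (v j : ℕ)) y } := by

  classical
  refine ⟨(d + n).natAbs + 1, ?_⟩
  intro l hl N _ _ 𝓝 _ _
  have hp2 : 2 ≤ p := (Fact.out : p.Prime).two_le
  have hplpos : 0 < p ^ l := pow_pos (Fact.out : p.Prime).pos l
  have hple : (d + n).natAbs < p ^ l := by
    calc (d + n).natAbs < l := hl
    _ < 2 ^ l := Nat.lt_two_pow_self
    _ ≤ p ^ l := Nat.pow_le_pow_left hp2 l
  rw [FstarGrade]
  rw [AddSubgroup.closure_le]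
  rintro z ⟨a, b, r, y, hr, hy, heq, rfl⟩
  set K := AddSubgroup.closure { z : Fstar k n p l N |
      ∃ v : Fin n → Fin (p ^ l), v ≠ topIdx n p l ∧
        ∃ y : N, z = tensorMk k n p l N (eMono k n p l fun j => (v j : ℕ)) y } with hK
  show tensorMk k n p l N (toT k n p l r) y ∈ K
  have expand : tensorMk k n p l N (toT k n p l r) y =
      ∑ m ∈ r.support, tensorMk k n p l N (toT k n p l (monomial m (coeff m r))) y := by
    simp only [tensorMk]
    show (toT k n p l r ⊗ₜ[MvPolynomial (Fin n) k] y : FrobTarget k n p l ⊗[MvPolynomial (Fin n) k] N) =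
      ∑ m ∈ r.support, toT k n p l (monomial m (coeff m r)) ⊗ₜ[MvPolynomial (Fin n) k] y
    rw [← TensorProduct.sum_tmul]
    congr 1
    show r = ∑ m ∈ r.support, monomial m (coeff m r)
    exact (support_sum_monomial_coeff r).symm
  rw [expand]
  refine AddSubgroup.sum_mem K ?_
  intro m hm
  -- degree of the monomial
  have ha : ∑ j, m j = a := by
    have h0 : m.degree = a := by
      rw [Finsupp.degree_eq_weight_one]
      exact ((mem_homogeneousSubmodule _ _).mp hr) (mem_support_iff.mp hm)
    rw [← h0, Finsupp.degree]
    exact (Finset.sum_subset (Finset.subset_univ _)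
      (fun j _ hj => Finsupp.notMem_support_iff.mp hj)).symm
  -- take p^l-th root of the coefficient
  obtain ⟨c', hc'⟩ := (bijective_iterateFrobenius k p l).surjective (coeff m r)
  rw [iterateFrobenius_def] at hc'
  set q : Fin n → ℕ := fun j => m j / p ^ l with hq
  set v : Fin n → Fin (p ^ l) := fun j => ⟨m j % p ^ l, Nat.mod_lt _ hplpos⟩ with hv
  -- the index v is not the top index
  have hvtop : v ≠ topIdx n p l := by
    intro hvt
    have hmod : ∀ j : Fin n, m j % p ^ l = p ^ l - 1 := fun j => congrArg Fin.val (congrFun hvt j)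
    have hnat : a + n = p ^ l * ((∑ j, q j) + n) := by
      have hmj : ∀ j : Fin n, m j + 1 = p ^ l * q j + p ^ l := by
        intro j
        have h1 : p ^ l * q j + m j % p ^ l = m j := Nat.div_add_mod (m j) (p ^ l)
        have h2 := hmod j
        omega
      calc a + n = ∑ j, (m j + 1) := by
            rw [Finset.sum_add_distrib, ha]; simp
        _ = ∑ j, (p ^ l * q j + p ^ l) := Finset.sum_congr rfl (fun j _ => hmj j)
        _ = p ^ l * ((∑ j, q j) + n) := by
            rw [Finset.sum_add_distrib, ← Finset.mul_sum, Finset.sum_const, Finset.card_fin,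
              mul_add, smul_eq_mul]
            ring
    have hdvd : (p : ℤ) ^ l ∣ d + n := by
      refine ⟨((∑ j, q j : ℕ) : ℤ) + n + b, ?_⟩
      have h2 : ((a : ℤ) + n) = (p : ℤ) ^ l * (((∑ j, q j : ℕ) : ℤ) + n) := by
        exact_mod_cast congrArg (Nat.cast : ℕ → ℤ) hnat
      rw [← heq]
      rw [mul_add ((p : ℤ) ^ l) (((∑ j, q j : ℕ) : ℤ) + n) b, ← h2]
      ring
    have hne : d + n ≠ 0 := fun h => hd (by linarith)
    have hdvd' : p ^ l ∣ (d + n).natAbs := by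
      have := Int.natAbs_dvd_natAbs.mpr hdvd
      rwa [Int.natAbs_pow, Int.natAbs_natCast] at this
    exact absurd (Nat.le_of_dvd (Int.natAbs_pos.mpr hne) hdvd') hple.not_ge
  -- factor the monomial
  have hfac : (monomial m (coeff m r) : MvPolynomial (Fin n) k) =
      (iterateFrobenius (MvPolynomial (Fin n) k) p l (C c' * ∏ j, X j ^ q j)) *
        ∏ j, X j ^ (m j % p ^ l) := by
    rw [iterateFrobenius_def, mul_pow, ← C_pow, hc', mul_assoc, ← Finset.prod_pow,
      ← Finset.prod_mul_distrib]
    rw [monomial_eq]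
    congr 1
    rw [Finsupp.prod_fintype _ _ (fun j => pow_zero _)]
    refine Finset.prod_congr rfl fun j _ => ?_
    rw [← pow_mul, ← pow_add]
    congr 1
    exact (Nat.div_add_mod' (m j) (p ^ l)).symm
  -- rewrite the tensor
  have hsmul : toT k n p l (monomial m (coeff m r)) =
      (C c' * ∏ j, X j ^ q j : MvPolynomial (Fin n) k) • (eMono k n p l fun j => (v j : ℕ)) := by
    rw [Algebra.smul_def, RingHom.algebraMap_toAlgebra]
    show toT k n p l (monomial m (coeff m r)) =
      (frobHom k n p l (C c' * ∏ j, X j ^ q j)) * (eMono k n p l fun j => (v j : ℕ))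
    exact hfac
  rw [tensorMk, hsmul, TensorProduct.smul_tmul]
  exact AddSubgroup.subset_closure ⟨v, hvtop, _, rfl⟩
end
end
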